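/- arXiv:2510.11723 — 5 statements merged into one kernel-verified Lean document; each statement's English description precedes it below -/
import Mathlib

section
/- Let p > q ≥ 1 be coprime integers and let n be a positive integer with expansion u = rep_{p/q}(n). Then the infinite word wmin_{p/q}(u) is normal over the alphabet {0,…,q−1} if and only if for every l ≥ 1 the integer sequence (T_{p/q}^m(n))_{m∈ℕ} is equidistributed in the residue classes modulo q^l. -/
/-- The valuation in base `p/q` of a digit word (most significant digit first):
`val_{p/q}(a_k ⋯ a_0) = (1/q) ∑ a_i (p/q)^i`, with `val(ε) = 0`. -/
def ratVal (p q : ℕ) (w : List ℕ) : ℚ :=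
  w.foldl (fun x a => (p : ℚ) / q * x + (a : ℚ) / q) 0

/-- Membership in the language `L_{p/q}`: all letters lie in `{0,…,p-1}`, the valuation
is a nonnegative integer, and the word is empty or has nonzero leading digit. -/
def InLang (p q : ℕ) (w : List ℕ) : Prop :=
  (∀ a ∈ w, a < p) ∧ (∃ n : ℕ, ratVal p q w = n) ∧ w.head? ≠ some 0

/-- `v` is the lexicographically least word of length `l` over `{0,…,p-1}`
such that `u ++ v ∈ L_{p/q}`. -/
def IsWmin (p q : ℕ) (u : List ℕ) (l : ℕ) (v : List ℕ) : Prop :=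
  v.length = l ∧ InLang p q (u ++ v) ∧
    ∀ v' : List ℕ, v'.length = l → InLang p q (u ++ v') →
      ¬ List.Lex (· < · : ℕ → ℕ → Prop) v' v

/-- `v` is the lexicographically greatest word of length `l` over `{0,…,p-1}`
such that `u ++ v ∈ L_{p/q}`. -/
def IsWmax (p q : ℕ) (u : List ℕ) (l : ℕ) (v : List ℕ) : Prop :=
  v.length = l ∧ InLang p q (u ++ v) ∧
    ∀ v' : List ℕ, v'.length = l → InLang p q (u ++ v') →
      ¬ List.Lex (· < · : ℕ → ℕ → Prop) v v'

/-- `w : ℕ → ℕ` is the infinite minimal word with seed `u`: its prefix of length `l`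
is `wmin_{p/q}(u,l)` for every `l`. -/
def IsWminInf (p q : ℕ) (u : List ℕ) (w : ℕ → ℕ) : Prop :=
  ∀ l : ℕ, IsWmin p q u l ((List.range l).map w)

/-- `w : ℕ → ℕ` is the infinite maximal word with seed `u`: its prefix of length `l`
is `wmax_{p/q}(u,l)` for every `l`. -/
def IsWmaxInf (p q : ℕ) (u : List ℕ) (w : ℕ → ℕ) : Prop :=
  ∀ l : ℕ, IsWmax p q u l ((List.range l).map w)

/-- The infinite word `w` is normal over the finite alphabet `A`: all its letters lie in `A`,
and every finite word `v` of length `l ≥ 1` over `A` occurs in `w` with limit frequency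
`1 / |A|^l`. -/
def NormalOver (w : ℕ → ℕ) (A : Finset ℕ) : Prop :=
  (∀ n, w n ∈ A) ∧
  ∀ l : ℕ, 1 ≤ l → ∀ v : List ℕ, v.length = l → (∀ a ∈ v, a ∈ A) →
    Filter.Tendsto
      (fun N => (((Finset.range N).filter
          (fun m => (List.range l).map (fun i => w (m + i)) = v)).card : ℝ) / N)
      Filter.atTop (nhds (1 / (A.card : ℝ) ^ l))

/-- The map `T_{p/q} : x ↦ ⌈px/q⌉` on the integers. -/
def Tmap (p q : ℕ) (x : ℤ) : ℤ := ⌈((p : ℚ) * (x : ℚ)) / (q : ℚ)⌉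

/-- The integer sequence `x` is equidistributed in the residue classes modulo `M`:
for every `r ∈ {0,…,M-1}`, the frequency of `m < N` with `x m ≡ r (mod M)`
tends to `1/M` as `N → ∞`. -/
def EquidistributedMod (x : ℕ → ℤ) (M : ℕ) : Prop :=
  ∀ r : ℕ, r < M →
    Filter.Tendsto
      (fun N => (((Finset.range N).filter (fun m => x m % (M : ℤ) = (r : ℤ))).card : ℝ) / N)
      Filter.atTop (nhds (1 / (M : ℝ)))


/- ### Auxiliary definitions and lemmas ### -/




def myVal (p q : ℕ) (w : List ℕ) : ℚ :=
  w.foldl (fun x (a : ℕ) => (p : ℚ) / q * x + (a : ℚ) / q) 0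

lemma ratVal_eq_myVal (p q : ℕ) (w : List ℕ) : ratVal p q w = myVal p q w := by
  unfold ratVal myVal
  rw [show (do let a ← w; pure ((a:ℚ))) = w.map (Nat.cast : ℕ → ℚ) from
    List.map_eq_flatMap.symm]
  rw [List.foldl_map]

def dig (p q : ℕ) (x : ℤ) : ℕ := ((-(p * x)) % q).toNat

section basic
variable {p q : ℕ}

lemma dig_lt (hq : 0 < q) (x : ℤ) : dig p q x < q := by
  have h := Int.emod_lt_of_pos (-(p * x)) (by exact_mod_cast hq : (0:ℤ) < q)
  unfold dig; omega

lemma dig_cast (hq : 0 < q) (x : ℤ) : ((dig p q x : ℤ)) = (-(p * x)) % q := by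
  have h := Int.emod_nonneg (-(p * x)) (by positivity : ((q:ℤ)) ≠ 0)
  unfold dig; omega

/-- key: q * T x = p x + dig x -/
lemma q_mul_Tmap (hq : 0 < q) (x : ℤ) :
    (q : ℤ) * Tmap p q x = p * x + dig p q x := by
  have hq0 : ((q:ℤ)) ≠ 0 := by positivity
  have hdvd : (q:ℤ) ∣ (p * x + dig p q x) := by
    rw [dig_cast hq]
    have := Int.emod_emod_of_dvd (-(p*x)) (dvd_refl (q:ℤ))
    have h2 : ((p:ℤ) * x + -(p * x) % q) % q = 0 := by
      conv_lhs => rw [Int.add_emod, Int.emod_emod_of_dvd _ (dvd_refl (q:ℤ))]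
      rw [← Int.add_emod]
      simp
    exact Int.dvd_of_emod_eq_zero h2
  obtain ⟨k, hk⟩ := hdvd
  have h1 : ((dig p q x : ℤ)) < q := by exact_mod_cast dig_lt hq x
  have h0 : (0:ℤ) ≤ dig p q x := Int.ofNat_nonneg _
  have hceil : Tmap p q x = k := by
    rw [Tmap, Int.ceil_eq_iff]
    constructor
    · rw [lt_div_iff₀ (by positivity : (0:ℚ) < (q:ℚ))]
      push_cast
      have : (q:ℤ) * (k - 1) < p * x := by nlinarith [hk]
      exact_mod_cast by push_cast; nlinarith [this]
    · rw [div_le_iff₀ (by positivity : (0:ℚ) < (q:ℚ))]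
      have : (p:ℤ) * x ≤ k * q := by nlinarith [hk]
      exact_mod_cast by push_cast; nlinarith [this]
  rw [hceil]; linarith [hk]

end basic

def greedy (p q : ℕ) : ℤ → ℕ → List ℕ
  | _, 0 => []
  | x, l+1 => dig p q x :: greedy p q (Tmap p q x) l

section greedy
variable {p q : ℕ}

lemma greedy_length (x : ℤ) (l : ℕ) : (greedy p q x l).length = l := by
  induction l generalizing x with
  | zero => rfl
  | succ l ih => simp [greedy, ih]

lemma greedy_mem_lt (hq : 0 < q) (x : ℤ) (l : ℕ) : ∀ a ∈ greedy p q x l, a < q := by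
  induction l generalizing x with
  | zero => simp [greedy]
  | succ l ih =>
    intro a ha
    rcases List.mem_cons.mp ha with h | h
    · subst h; exact dig_lt hq x
    · exact ih _ a h

lemma greedy_eq_map (x : ℤ) (l : ℕ) :
    greedy p q x l = (List.range l).map (fun i => dig p q ((Tmap p q)^[i] x)) := by
  induction l generalizing x with
  | zero => rfl
  | succ l ih =>
    rw [List.range_succ_eq_map, List.map_cons, List.map_map]
    show dig p q x :: greedy p q (Tmap p q x) l = _ :: _
    congr 1
    rw [ih]
    congr 1

/-- foldl shift lemma -/
lemma foldl_shift (t : List ℕ) (z : ℚ) :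
    t.foldl (fun (x : ℚ) (a : ℕ) => (p : ℚ) / q * x + (a : ℚ) / q) z
      = ((p:ℚ)/q)^t.length * z + myVal p q t := by
  induction t generalizing z with
  | nil => simp [myVal]
  | cons a t ih =>
    simp only [List.foldl_cons, List.length_cons]
    rw [ih]
    have h2 : myVal p q (a :: t)
        = ((p:ℚ)/q)^t.length * ((p:ℚ)/q*0 + (a:ℚ)/q) + myVal p q t := by
      rw [myVal, List.foldl_cons, ih]
    rw [h2]; ring

lemma myVal_append (s t : List ℕ) :
    myVal p q (s ++ t) = ((p:ℚ)/q)^t.length * myVal p q s + myVal p q t := by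
  rw [myVal, List.foldl_append, foldl_shift]
  rfl

lemma myVal_nil : myVal p q [] = 0 := rfl

lemma myVal_singleton (a : ℕ) : myVal p q [a] = a / q := by
  simp [myVal]

/-- denominator clearing: q^len * ratVal is an integer -/
lemma myVal_den (hq : 0 < q) (t : List ℕ) :
    ∃ Z : ℤ, (q:ℚ)^t.length * myVal p q t = Z := by
  have hq0 : ((q:ℚ)) ≠ 0 := by positivity
  induction t with
  | nil => exact ⟨0, by simp [myVal]⟩
  | cons a t ih =>
    obtain ⟨Z, hZ⟩ := ih
    refine ⟨(p:ℤ)^t.length * a + q * Z, ?_⟩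
    have hcons : myVal p q (a :: t)
        = ((p:ℚ)/q)^t.length * ((a:ℚ)/q) + myVal p q t := by
      rw [myVal, List.foldl_cons, foldl_shift]
      ring_nf
    rw [List.length_cons, hcons]
    have hrv : myVal p q t = (Z:ℚ) / (q:ℚ)^t.length := by
      field_simp at hZ ⊢
      linarith [hZ]
    rw [hrv]
    push_cast
    simp only [div_pow]
    field_simp
    ring

end greedy

section arith
variable {p q : ℕ}

/-- If `s` has integer value `x` and `s ++ a :: t` has integer value, then `q ∣ p x + a`. -/
lemma digit_cong (hq : 0 < q) (hco : Nat.Coprime p q) (x N : ℤ) (s : List ℕ) (a : ℕ)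
    (t : List ℕ) (hs : myVal p q s = (x : ℚ)) (hN : myVal p q (s ++ a :: t) = (N : ℚ)) :
    (q : ℤ) ∣ p * x + a := by
  have hq0 : ((q:ℚ)) ≠ 0 := by positivity
  obtain ⟨Z, hZ⟩ := myVal_den (p := p) hq t
  set l := t.length with hl
  have happ := myVal_append (p := p) (q := q) s (a :: t)
  rw [hN, hs] at happ
  have hcons : myVal p q (a :: t)
      = ((p:ℚ)/q)^l * ((a:ℚ)/q) + myVal p q t := by
    rw [myVal, List.foldl_cons, foldl_shift]
    ring_nf
    rfl
  rw [hcons] at happ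
  have hrv : myVal p q t = (Z:ℚ) / (q:ℚ)^l := by
    field_simp at hZ ⊢
    linarith [hZ]
  rw [hrv] at happ
  -- happ : N = (p/q)^(l+1) * x + (p/q)^l * (a/q) + Z/q^l
  have key : ((q:ℤ))^(l+1) * N = p^(l+1) * x + p^l * a + q * Z := by
    have : ((q:ℚ))^(l+1) * (N:ℚ) = (p:ℚ)^(l+1) * x + (p:ℚ)^l * a + q * Z := by
      rw [happ]
      simp only [List.length_cons, ← hl]
      simp only [div_pow]
      field_simp
      ring
    exact_mod_cast this
  have hdvd : (q:ℤ) ∣ (p:ℤ)^l * (p * x + a) := by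
    have : (p:ℤ)^l * (p * x + a) = q * (q^l * N - Z) := by linear_combination -key
    exact ⟨_, this⟩
  have hcop : IsCoprime ((q:ℤ)) ((p:ℤ)^l) := by
    apply IsCoprime.pow_right
    rw [Int.isCoprime_iff_gcd_eq_one]
    simpa [Nat.coprime_comm] using hco.symm
  exact hcop.dvd_of_dvd_mul_left hdvd

/-- value of `u ++ greedy x l` is `T^[l] x`. -/
lemma myVal_append_greedy (hq : 0 < q) (u : List ℕ) (x : ℤ) (l : ℕ)
    (hu : myVal p q u = (x : ℚ)) :
    myVal p q (u ++ greedy p q x l) = (((Tmap p q)^[l] x : ℤ) : ℚ) := by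
  induction l generalizing u x with
  | zero => simpa [greedy] using hu
  | succ l ih =>
    have h1 : myVal p q (u ++ [dig p q x]) = ((Tmap p q x : ℤ) : ℚ) := by
      rw [myVal_append, myVal_singleton]
      rw [hu]
      have := q_mul_Tmap (p := p) hq x
      have hq0 : ((q:ℚ)) ≠ 0 := by positivity
      have : ((q:ℚ)) * (Tmap p q x : ℚ) = p * x + dig p q x := by exact_mod_cast this
      simp only [List.length_singleton, pow_one]
      field_simp
      linarith [this]
    have := ih (u ++ [dig p q x]) (Tmap p q x) h1
    rw [List.append_assoc] at this
    simpa [greedy, Function.iterate_succ_apply] using this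

lemma Tmap_ge (hq : 0 < q) (hpq : q < p) (x : ℤ) (hx : 0 ≤ x) : x ≤ Tmap p q x := by
  have h := q_mul_Tmap (p := p) hq x
  have h0 : (0:ℤ) ≤ dig p q x := Int.ofNat_nonneg _
  have hqx : (q:ℤ) * x ≤ p * x := by
    have : ((q:ℤ)) ≤ p := by exact_mod_cast hpq.le
    nlinarith
  nlinarith [h, (by exact_mod_cast hq : (0:ℤ) < (q:ℤ))]

lemma Tmap_iter_pos (hq : 0 < q) (hpq : q < p) (x : ℤ) (hx : 1 ≤ x) (l : ℕ) :
    1 ≤ (Tmap p q)^[l] x := by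
  induction l with
  | zero => simpa using hx
  | succ l ih =>
    rw [Function.iterate_succ_apply']
    exact le_trans ih (Tmap_ge hq hpq _ (by linarith))

end arith




section lang
variable {p q : ℕ}

lemma inLang_greedy (hq : 0 < q) (hpq : q < p) (u : List ℕ) (x : ℤ) (hx : 1 ≤ x)
    (hu : InLang p q u) (huv : myVal p q u = (x : ℚ)) (l : ℕ) :
    InLang p q (u ++ greedy p q x l) := by
  have hune : u ≠ [] := by
    intro h
    rw [h, myVal_nil] at huv
    have : x = 0 := by exact_mod_cast huv.symm
    omega
  refine ⟨?_, ?_, ?_⟩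
  · intro a ha
    rcases List.mem_append.mp ha with h | h
    · exact hu.1 a h
    · exact lt_trans (greedy_mem_lt hq x l a h) hpq
  · have hval := myVal_append_greedy hq u x l huv
    have hpos := Tmap_iter_pos hq hpq x hx l
    refine ⟨((Tmap p q)^[l] x).toNat, ?_⟩
    rw [ratVal_eq_myVal, hval]
    have : (((Tmap p q)^[l] x).toNat : ℤ) = (Tmap p q)^[l] x := Int.toNat_of_nonneg (by linarith)
    exact_mod_cast this.symm
  · rcases u with _ | ⟨b, u'⟩
    · exact absurd rfl hune
    · simpa using hu.2.2

/-- greedy is lexicographically minimal -/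
lemma greedy_min (hq : 0 < q) (hco : Nat.Coprime p q) :
    ∀ (l : ℕ) (u : List ℕ) (x : ℤ), myVal p q u = (x : ℚ) →
    ∀ v' : List ℕ, v'.length = l → InLang p q (u ++ v') →
      ¬ List.Lex (· < · : ℕ → ℕ → Prop) v' (greedy p q x l) := by
  intro l
  induction l with
  | zero =>
    intro u x hux v' hlen _ hlex
    rw [List.length_eq_zero_iff] at hlen
    subst hlen
    cases hlex
  | succ l ih =>
    intro u x hux v' hlen hv' hlex
    rcases v' with _ | ⟨a, t⟩
    · simp at hlen
    · obtain ⟨N, hN⟩ := hv'.2.1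
      rw [ratVal_eq_myVal] at hN
      have hdig : (q:ℤ) ∣ p * x + a := digit_cong hq hco x (N:ℤ) u a t hux (by exact_mod_cast hN)
      have hdig2 : (q:ℤ) ∣ p * x + dig p q x :=
        ⟨Tmap p q x, (q_mul_Tmap hq x).symm⟩
      rw [show greedy p q x (l+1) = dig p q x :: greedy p q (Tmap p q x) l from rfl] at hlex
      cases hlex with
      | rel h =>
        -- a < dig x : contradiction
        have hd : (q:ℤ) ∣ ((dig p q x : ℤ) - a) := by
          have := Int.dvd_sub hdig2 hdig
          simpa using this
        have h1 : ((dig p q x : ℤ)) < q := by exact_mod_cast dig_lt hq x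
        have h2 : (a:ℤ) < (dig p q x : ℤ) := by exact_mod_cast h
        have h3 : (dig p q x : ℤ) - a < q := by
          have : (0:ℤ) ≤ (a:ℤ) := Int.ofNat_nonneg _
          linarith
        obtain ⟨c, hc⟩ := hd
        have hq' : (0:ℤ) < q := by exact_mod_cast hq
        have hc1 : 1 ≤ c := by nlinarith
        nlinarith
      | cons h =>
        -- a = dig x, recurse
        have hnew : myVal p q (u ++ [dig p q x]) = ((Tmap p q x : ℤ) : ℚ) := by
          rw [myVal_append, myVal_singleton, hux]
          have h4 := q_mul_Tmap (p := p) hq x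
          have hq0 : ((q:ℚ)) ≠ 0 := by positivity
          have h5 : ((q:ℚ)) * (Tmap p q x : ℚ) = p * x + dig p q x := by exact_mod_cast h4
          simp only [List.length_singleton, pow_one]
          field_simp
          linarith [h5]
        have := ih (u ++ [dig p q x]) (Tmap p q x) hnew t (by simpa using hlen)
          (by rwa [List.append_assoc])
        exact this h
end lang

lemma lex_trichotomy : ∀ (a b : List ℕ), a.length = b.length →
    ¬ List.Lex (· < · : ℕ → ℕ → Prop) a b → ¬ List.Lex (· < · : ℕ → ℕ → Prop) b a → a = b := by
  intro a
  induction a with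
  | nil =>
    intro b hl _ _
    exact (List.length_eq_zero_iff.mp hl.symm).symm ▸ rfl
  | cons x a ih =>
    intro b hl h1 h2
    rcases b with _ | ⟨y, b⟩
    · simp at hl
    · rcases Nat.lt_trichotomy x y with h | h | h
      · exact absurd (List.Lex.rel h) h1
      · subst h
        have := ih b (by simpa using hl)
          (fun hh => h1 (List.Lex.cons hh)) (fun hh => h2 (List.Lex.cons hh))
        rw [this]
      · exact absurd (List.Lex.rel h) h2

section uniq
variable {p q : ℕ}

/-- the infinite minimal word is the greedy digit sequence -/
lemma w_eq_dig (hq : 0 < q) (hpq : q < p) (hco : Nat.Coprime p q)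
    (u : List ℕ) (x : ℤ) (hx : 1 ≤ x) (hu : InLang p q u) (huv : myVal p q u = (x : ℚ))
    (w : ℕ → ℕ) (hw : IsWminInf p q u w) (m : ℕ) :
    w m = dig p q ((Tmap p q)^[m] x) := by
  have hglen := greedy_length (p := p) (q := q) x (m+1)
  have hmin1 := (hw (m+1)).2.2
  have hmin2 := greedy_min hq hco (m+1) u x huv ((List.range (m+1)).map w)
    (by simp) (hw (m+1)).2.1
  have heq : (List.range (m+1)).map w = greedy p q x (m+1) := by
    apply lex_trichotomy
    · simp [hglen]
    · exact hmin2
    · exact hmin1 (greedy p q x (m+1)) hglen (inLang_greedy hq hpq u x hx hu huv (m+1))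
  rw [greedy_eq_map] at heq
  have := congrArg (fun t => t[m]?) heq
  simpa [List.getElem?_map, List.getElem?_range (Nat.lt_succ_self m)] using this

/-- mod invariance: congruent mod q^l gives equal greedy words -/
lemma greedy_mod (hq : 0 < q) : ∀ (l : ℕ) (y z : ℤ), ((q:ℤ))^l ∣ y - z →
    greedy p q y l = greedy p q z l := by
  intro l
  induction l with
  | zero => intro y z _; rfl
  | succ l ih =>
    intro y z hd
    have hq' : (0:ℤ) < q := by exact_mod_cast hq
    have hdq : (q:ℤ) ∣ y - z := dvd_trans (dvd_pow_self _ (Nat.succ_ne_zero l)) hd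
    have hdigeq : dig p q y = dig p q z := by
      have hmod : y ≡ z [ZMOD (q:ℤ)] := (Int.modEq_iff_dvd.mpr hdq).symm
      have h : (-((p:ℤ) * y)) % q = (-((p:ℤ) * z)) % q := (hmod.mul_left (p:ℤ)).neg
      unfold dig
      rw [h]
    have hT : ((q:ℤ))^l ∣ Tmap p q y - Tmap p q z := by
      have h1 := q_mul_Tmap (p := p) hq y
      have h2 := q_mul_Tmap (p := p) hq z
      have h3 : (q:ℤ) * (Tmap p q y - Tmap p q z) = p * (y - z) := by
        rw [mul_sub, h1, h2, hdigeq]; ring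
      obtain ⟨c, hc⟩ := hd
      have : (q:ℤ) * (Tmap p q y - Tmap p q z) = q * (q^l * (p * c)) := by
        rw [h3, hc]; ring
      have h4 : Tmap p q y - Tmap p q z = q^l * (p * c) :=
        mul_left_cancel₀ (by positivity) this
      exact ⟨_, h4⟩
    show dig p q y :: greedy p q (Tmap p q y) l = dig p q z :: greedy p q (Tmap p q z) l
    rw [hdigeq, ih _ _ hT]

end uniq

section conv
variable {p q : ℕ}

/-- converse: equal greedy words give congruence mod q^l -/
lemma greedy_mod_conv (hq : 0 < q) (hco : Nat.Coprime p q) :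
    ∀ (l : ℕ) (y z : ℤ), greedy p q y l = greedy p q z l → ((q:ℤ))^l ∣ y - z := by
  intro l
  induction l with
  | zero => intro y z _; simp
  | succ l ih =>
    intro y z h
    have h1 : dig p q y = dig p q z := by
      have := congrArg List.head? h
      simpa [greedy] using this
    have h2 : greedy p q (Tmap p q y) l = greedy p q (Tmap p q z) l := by
      have := congrArg List.tail h
      simpa [greedy] using this
    have h3 := ih _ _ h2
    have h4 : ((q:ℤ))^(l+1) ∣ (p:ℤ) * (y - z) := by
      have e : (p:ℤ) * (y - z) = q * (Tmap p q y - Tmap p q z) := by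
        have e1 := q_mul_Tmap (p := p) hq y
        have e2 := q_mul_Tmap (p := p) hq z
        have h1' : ((dig p q y : ℤ)) = ((dig p q z : ℤ)) := by exact_mod_cast h1
        linear_combination -e1 + e2 - h1'
      obtain ⟨c, hc⟩ := h3
      exact ⟨c, by rw [e, hc]; ring⟩
    have hcop : IsCoprime ((q:ℤ)^(l+1)) ((p:ℤ)) := by
      apply IsCoprime.pow_left
      rw [Int.isCoprime_iff_gcd_eq_one]
      simpa [Nat.coprime_comm] using hco.symm
    exact hcop.dvd_of_dvd_mul_left h4

/-- surjectivity: every word over {0..q-1} is a greedy word of some r < q^l -/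
lemma greedy_surj (hq : 0 < q) (hco : Nat.Coprime p q) :
    ∀ (l : ℕ) (v : List ℕ), v.length = l → (∀ a ∈ v, a < q) →
      ∃ r : ℕ, r < q^l ∧ greedy p q (r:ℤ) l = v := by
  intro l
  induction l with
  | zero =>
    intro v hlen _
    exact ⟨0, by simp [pow_zero], by simp [List.length_eq_zero_iff.mp hlen, greedy]⟩
  | succ l ih =>
    intro v hlen hv
    rcases v with _ | ⟨a, t⟩
    · simp at hlen
    · obtain ⟨r', hr', ht⟩ := ih t (by simpa using hlen)
        (fun b hb => hv b (List.mem_cons_of_mem a hb))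
      have ha : a < q := hv a List.mem_cons_self
      have hcop : IsCoprime ((p:ℤ)) ((q:ℤ)^(l+1)) := by
        apply IsCoprime.pow_right
        rw [Int.isCoprime_iff_gcd_eq_one]
        exact hco
      obtain ⟨c, d, hcd⟩ := hcop
      set M : ℤ := (q:ℤ)^(l+1) with hM
      have hM0 : (0:ℤ) < M := by positivity
      set r0 : ℤ := c * ((q:ℤ) * r' - a) with hr0def
      set r : ℤ := r0 % M with hrdef
      have hr_nonneg : 0 ≤ r := Int.emod_nonneg r0 (ne_of_gt hM0)
      have hr_lt : r < M := Int.emod_lt_of_pos r0 hM0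
      have hkey : (p:ℤ) * r ≡ (q:ℤ) * r' - a [ZMOD M] := by
        have e0 : r ≡ r0 [ZMOD M] := Int.emod_emod_of_dvd r0 (dvd_refl M)
        have e1 : (p:ℤ) * r ≡ (p:ℤ) * r0 [ZMOD M] := e0.mul_left (p:ℤ)
        have e2 : (p:ℤ) * r0 ≡ (q:ℤ) * r' - a [ZMOD M] :=
          Int.modEq_iff_dvd.mpr ⟨d * ((q:ℤ) * r' - a),
            by rw [hr0def]; linear_combination (-((q:ℤ)*r' - (a:ℤ))) * hcd⟩
        exact e1.trans e2
      -- dig r = a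
      have hq' : (0:ℤ) < q := by exact_mod_cast hq
      have hdvdqM : (q:ℤ) ∣ M := dvd_pow_self _ (Nat.succ_ne_zero l)
      have hkeyq : (p:ℤ) * r ≡ (q:ℤ) * r' - a [ZMOD (q:ℤ)] := hkey.of_dvd hdvdqM
      have hdig : dig p q r = a := by
        have h1 : (-((p:ℤ) * r)) ≡ (a:ℤ) [ZMOD (q:ℤ)] := by
          have h2 : (-((p:ℤ) * r)) ≡ -((q:ℤ) * r' - a) [ZMOD (q:ℤ)] := hkeyq.neg
          have h3 : -((q:ℤ) * r' - a) ≡ (a:ℤ) [ZMOD (q:ℤ)] :=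
            Int.modEq_iff_dvd.mpr ⟨r', by ring⟩
          exact h2.trans h3
        have h4 : (-((p:ℤ) * r)) % q = (a:ℤ) % q := h1
        have h5 : ((a:ℤ)) % q = a := Int.emod_eq_of_lt (Int.ofNat_nonneg a) (by exact_mod_cast ha)
        have := dig_cast (p := p) hq r
        unfold dig
        omega
      -- T r ≡ r' mod q^l
      have hT : ((q:ℤ))^l ∣ Tmap p q r - r' := by
        have e3 := q_mul_Tmap (p := p) hq r
        rw [hdig] at e3
        have e4 : (q:ℤ) * Tmap p q r ≡ (q:ℤ) * r' [ZMOD M] := by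
          rw [e3]
          have : ((p:ℤ) * r + a) - ((q:ℤ)*r' - a + a) = (p:ℤ)*r - ((q:ℤ)*r' - a) := by ring
          calc ((p:ℤ) * r + a) ≡ ((q:ℤ)*r' - a) + a [ZMOD M] := hkey.add_right a
            _ = (q:ℤ) * r' := by ring
        have e4' := Int.modEq_iff_dvd.mp e4.symm
        obtain ⟨k, hk⟩ := e4'
        refine ⟨k, ?_⟩
        have h6 : (q:ℤ) * (Tmap p q r - r') = (q:ℤ) * ((q:ℤ)^l * k) := by
          rw [hM] at hk
          linear_combination hk
        exact mul_left_cancel₀ (ne_of_gt hq') h6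
      refine ⟨r.toNat, ?_, ?_⟩
      · have : ((r.toNat : ℤ)) = r := Int.toNat_of_nonneg hr_nonneg
        have : (r.toNat : ℤ) < (q:ℤ)^(l+1) := by rw [this]; exact hr_lt
        exact_mod_cast this
      · have hcast : ((r.toNat : ℤ)) = r := Int.toNat_of_nonneg hr_nonneg
        rw [hcast]
        show dig p q r :: greedy p q (Tmap p q r) l = a :: t
        rw [hdig, greedy_mod hq l _ _ hT, ht]
end conv



section main
variable {p q : ℕ}

lemma greedy_eq_iff_mod (hq : 0 < q) (hco : Nat.Coprime p q) (l : ℕ) (r : ℕ) (hr : r < q^l)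
    (y : ℤ) : greedy p q y l = greedy p q (r:ℤ) l ↔ y % ((q^l : ℕ) : ℤ) = (r:ℤ) := by
  have hc : ((q^l : ℕ) : ℤ) = (q:ℤ)^l := by push_cast; ring
  have hrmod : (r:ℤ) % ((q:ℤ)^l) = (r:ℤ) :=
    Int.emod_eq_of_lt (Int.ofNat_nonneg r) (by exact_mod_cast hr)
  rw [hc]
  constructor
  · intro h
    have hd := greedy_mod_conv hq hco l y (r:ℤ) h
    have : y ≡ (r:ℤ) [ZMOD ((q:ℤ)^l)] := Int.modEq_iff_dvd.mpr (by
      obtain ⟨k, hk⟩ := hd; exact ⟨-k, by rw [← neg_sub, hk]; ring⟩)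
    rw [Int.ModEq] at this
    rw [this, hrmod]
  · intro h
    apply greedy_mod hq l
    have : y ≡ (r:ℤ) [ZMOD ((q:ℤ)^l)] := by rw [Int.ModEq, h, hrmod]
    obtain ⟨k, hk⟩ := Int.modEq_iff_dvd.mp this
    exact ⟨-k, by rw [← neg_sub ((r:ℤ)) y, hk]; ring⟩

end main

/-- For coprime `p > q ≥ 1` and a positive integer `n` with expansion `u = rep_{p/q}(n)`:
the infinite word `wmin_{p/q}(u)` is normal over `{0,…,q-1}` iff for every `l ≥ 1`
the sequence `(T_{p/q}^m(n))_m` is equidistributed in the residue classes modulo `q^l`. -/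
theorem stmt12 (p q : ℕ) (hq : 1 ≤ q) (hpq : q < p) (hco : Nat.Coprime p q)
    (n : ℕ) (hn : 0 < n)
    (u : List ℕ) (hu : InLang p q u) (huval : ratVal p q u = n)
    (w : ℕ → ℕ) (hw : IsWminInf p q u w) :
    NormalOver w (Finset.range q) ↔
      ∀ l : ℕ, 1 ≤ l → EquidistributedMod (fun m => (Tmap p q)^[m] (n : ℤ)) (q ^ l) := by

  have hq0 : 0 < q := hq
  have hxn : (1:ℤ) ≤ (n:ℤ) := by exact_mod_cast hn
  have huv : myVal p q u = (((n:ℤ)):ℚ) := by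
    rw [← ratVal_eq_myVal, huval]; push_cast; ring
  have hwd : ∀ m, w m = dig p q ((Tmap p q)^[m] (n:ℤ)) :=
    fun m => w_eq_dig hq0 hpq hco u (n:ℤ) hxn hu huv w hw m
  have hblock : ∀ m l : ℕ,
      (List.range l).map (fun i => w (m + i)) = greedy p q ((Tmap p q)^[m] (n:ℤ)) l := by
    intro m l
    rw [greedy_eq_map]
    apply List.map_congr_left
    intro i _
    rw [hwd (m + i)]
    congr 1
    rw [← Function.iterate_add_apply]
    congr 1
    omega
  constructor
  · intro hN l hl r hr
    have hv_len := greedy_length (p := p) (q := q) ((r:ℤ)) l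
    have hv_mem : ∀ a ∈ greedy p q (r:ℤ) l, a ∈ Finset.range q := by
      intro a ha
      exact Finset.mem_range.mpr (greedy_mem_lt hq0 _ l a ha)
    have htend := hN.2 l hl (greedy p q (r:ℤ) l) hv_len hv_mem
    rw [Finset.card_range] at htend
    have hfn : ∀ N : ℕ, ((Finset.range N).filter
          (fun m => (List.range l).map (fun i => w (m + i)) = greedy p q (r:ℤ) l))
        = ((Finset.range N).filter
          (fun m => (Tmap p q)^[m] (n:ℤ) % ((q^l : ℕ) : ℤ) = (r:ℤ))) := by
      intro N
      apply Finset.filter_congr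
      intro m _
      rw [hblock m l]
      exact greedy_eq_iff_mod hq0 hco l r hr _
    have hlim : (1 / ((q:ℝ))^l) = 1 / (((q^l : ℕ)) : ℝ) := by push_cast; ring
    rw [hlim] at htend
    convert htend using 2 with N
    rw [hfn N]
  · intro hE
    constructor
    · intro m
      rw [hwd m]
      exact Finset.mem_range.mpr (dig_lt hq0 _)
    · intro l hl v hv_len hv_mem
      obtain ⟨r, hr, hgr⟩ := greedy_surj hq0 hco l v hv_len
        (fun a ha => Finset.mem_range.mp (hv_mem a ha))
      have htend := hE l hl r hr
      have hfn : ∀ N : ℕ, ((Finset.range N).filter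
            (fun m => (List.range l).map (fun i => w (m + i)) = v))
          = ((Finset.range N).filter
            (fun m => (Tmap p q)^[m] (n:ℤ) % ((q^l : ℕ) : ℤ) = (r:ℤ))) := by
        intro N
        apply Finset.filter_congr
        intro m _
        rw [hblock m l, ← hgr]
        exact greedy_eq_iff_mod hq0 hco l r hr _
      rw [Finset.card_range]
      have hlim : (1 / (((q^l : ℕ)) : ℝ)) = 1 / ((q:ℝ))^l := by push_cast; ring
      rw [hlim] at htend
      convert htend using 2 with N
      rw [hfn N]
end

section
/- Let p > q ≥ 1 be coprime integers. The following are equivalent: (i) for every u ∈ L_{p/q} the infinite word wmax_{p/q}(u) is normal over {p−q,…,p−1}, and for every nonempty u ∈ L_{p/q} the infinite word wmin_{p/q}(u) is normal over {0,…,q−1}; (ii) for every positive integer n and every natural number k, the integer sequence (T_{p/q}^l(n))_{l∈ℕ} is equidistributed in the residue classes modulo q^k. -/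
namespace S13

/-! ### Integer-valued evaluation chains -/

def ostep (p q : ℕ) (o : Option ℤ) (a : ℕ) : Option ℤ :=
  o.bind fun x => if (q:ℤ) ∣ ((p:ℤ)*x + a) then some (((p:ℤ)*x + a) / q) else none

def oval (p q : ℕ) (x : ℤ) (w : List ℕ) : Option ℤ := w.foldl (ostep p q) (some x)

lemma foldl_ostep_none (p q : ℕ) (w : List ℕ) : w.foldl (ostep p q) none = none := by
  induction w with
  | nil => rfl
  | cons a t ih => simpa [ostep] using ih

lemma oval_nil (p q : ℕ) (x : ℤ) : oval p q x [] = some x := rfl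

lemma oval_cons (p q : ℕ) (x : ℤ) (a : ℕ) (t : List ℕ) :
    oval p q x (a :: t) =
      if (q:ℤ) ∣ ((p:ℤ)*x + a) then oval p q (((p:ℤ)*x + a)/q) t else none := by
  by_cases h : (q:ℤ) ∣ ((p:ℤ)*x + a)
  · simp [oval, ostep, h]
  · simp [oval, ostep, h, foldl_ostep_none]

lemma oval_append (p q : ℕ) (x y : ℤ) (u v : List ℕ) (h : oval p q x u = some y) :
    oval p q x (u ++ v) = oval p q y v := by
  unfold oval at *
  rw [List.foldl_append, h]

lemma oval_append_some (p q : ℕ) (x m : ℤ) (u v : List ℕ)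
    (h : oval p q x (u ++ v) = some m) : ∃ y, oval p q x u = some y ∧ oval p q y v = some m := by
  unfold oval at *
  rw [List.foldl_append] at h
  cases hu : List.foldl (ostep p q) (some x) u with
  | none => rw [hu, foldl_ostep_none] at h; exact absurd h (by simp)
  | some y => exact ⟨y, rfl, by rw [hu] at h; exact h⟩

lemma oval_cons_some (p q : ℕ) (x : ℤ) (a : ℕ) (t : List ℕ)
    (h : (oval p q x (a :: t)).isSome) :
    (q:ℤ) ∣ ((p:ℤ)*x + a) ∧ (oval p q (((p:ℤ)*x + a)/q) t).isSome := by
  rw [oval_cons] at h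
  by_cases hd : (q:ℤ) ∣ ((p:ℤ)*x + a)
  · rw [if_pos hd] at h; exact ⟨hd, h⟩
  · rw [if_neg hd] at h; simp at h

lemma oval_nonneg (p q : ℕ) : ∀ (w : List ℕ) (x y : ℤ), oval p q x w = some y → 0 ≤ x → 0 ≤ y := by
  intro w
  induction w with
  | nil => intro x y h hx; rw [oval_nil] at h; cases h; exact hx
  | cons a t ih =>
    intro x y h hx
    rw [oval_cons] at h
    by_cases hd : (q:ℤ) ∣ ((p:ℤ)*x + a)
    · rw [if_pos hd] at h
      exact ih _ _ h (Int.ediv_nonneg (by positivity) (by positivity))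
    · rw [if_neg hd] at h; exact absurd h (by simp)

lemma oval_pos (p q : ℕ) (hq : 1 ≤ q) (hpq : q < p) :
    ∀ (w : List ℕ) (x y : ℤ), oval p q x w = some y → 1 ≤ x → 1 ≤ y := by
  intro w
  induction w with
  | nil => intro x y h hx; rw [oval_nil] at h; cases h; exact hx
  | cons a t ih =>
    intro x y h hx
    rw [oval_cons] at h
    by_cases hd : (q:ℤ) ∣ ((p:ℤ)*x + a)
    · rw [if_pos hd] at h
      refine ih _ _ h ?_
      obtain ⟨e, he⟩ := hd
      have he' : ((p:ℤ)*x + a)/q = e := by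
        rw [he]; exact Int.mul_ediv_cancel_left e (by positivity)
      rw [he']
      have hp1 : (q:ℤ) < p := by exact_mod_cast hpq
      have ha : (0:ℤ) ≤ a := by positivity
      nlinarith [he, hx]
    · rw [if_neg hd] at h; exact absurd h (by simp)

/-! ### Rational valuation bridge -/

def qVal (p q : ℕ) (x : ℚ) (w : List ℕ) : ℚ :=
  w.foldl (fun (y : ℚ) (a : ℕ) => (p : ℚ) / q * y + (a : ℚ) / q) x

lemma coeM_eq (w : List ℕ) :
    ((do let a ← w; pure ↑a : List ℚ)) = List.map (fun a : ℕ => (a:ℚ)) w := by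
  induction w with
  | nil => rfl
  | cons a t ih => simpa using ih

lemma qVal_cons (p q : ℕ) (x : ℚ) (a : ℕ) (t : List ℕ) :
    qVal p q x (a :: t) = qVal p q ((p:ℚ)/q * x + (a:ℚ)/q) t := rfl

lemma qVal_concat (p q : ℕ) (x : ℚ) (a : ℕ) (w : List ℕ) :
    qVal p q x (w ++ [a]) = (p:ℚ)/q * qVal p q x w + (a:ℚ)/q := by
  unfold qVal; rw [List.foldl_append]; rfl

lemma qVal_affine (p q : ℕ) : ∀ (w : List ℕ) (r : ℚ),
    qVal p q r w = ((p:ℚ)/q)^w.length * r + qVal p q 0 w := by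
  intro w
  induction w with
  | nil => intro r; simp [qVal]
  | cons a t ih =>
    intro r
    rw [qVal_cons, qVal_cons, ih, ih ((p:ℚ)/q * 0 + (a:ℚ)/q)]
    simp only [List.length_cons, pow_succ]
    ring

lemma qVal_den (p q : ℕ) (hq : 1 ≤ q) :
    ∀ w : List ℕ, ∃ z : ℤ, qVal p q 0 w * (q:ℚ)^w.length = (z:ℚ) := by
  have hq0 : (q:ℚ) ≠ 0 := by exact_mod_cast (by omega : q ≠ 0)
  intro w
  induction w with
  | nil => exact ⟨0, by simp [qVal]⟩
  | cons a t ih =>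
    obtain ⟨z, hz⟩ := ih
    refine ⟨(p:ℤ)^t.length * a + q * z, ?_⟩
    rw [qVal_cons, qVal_affine, List.length_cons, pow_succ, div_pow]
    push_cast
    field_simp
    nlinarith [hz]

lemma oval_qVal (p q : ℕ) (hq : 1 ≤ q) : ∀ (w : List ℕ) (x y : ℤ),
    oval p q x w = some y → qVal p q (x:ℚ) w = (y:ℚ) := by
  have hq0 : (q:ℚ) ≠ 0 := by exact_mod_cast (by omega : q ≠ 0)
  intro w
  induction w with
  | nil =>
    intro x y h; rw [oval_nil] at h; cases h; rfl
  | cons a t ih =>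
    intro x y h
    rw [oval_cons] at h
    by_cases hd : (q:ℤ) ∣ ((p:ℤ)*x + a)
    · rw [if_pos hd] at h
      have := ih _ _ h
      rw [qVal_cons, ← this]
      congr 1
      rw [Int.cast_div_charZero hd]
      push_cast
      ring
    · rw [if_neg hd] at h; exact absurd h (by simp)

lemma qVal_int_oval (p q : ℕ) (hq : 1 ≤ q) (hpq : q < p) (hco : Nat.Coprime p q) :
    ∀ (w : List ℕ) (x y : ℤ), qVal p q (x:ℚ) w = (y:ℚ) → oval p q x w = some y := by
  have hq0 : (q:ℚ) ≠ 0 := by exact_mod_cast (by omega : q ≠ 0)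
  have hp0 : (p:ℚ) ≠ 0 := by exact_mod_cast (by omega : p ≠ 0)
  have hqz : (q:ℤ) ≠ 0 := by exact_mod_cast (by omega : q ≠ 0)
  intro w
  induction w using List.reverseRecOn with
  | nil =>
    intro x y h
    have hxy : (x:ℚ) = (y:ℚ) := h
    have : x = y := by exact_mod_cast hxy
    rw [oval_nil, this]
  | append_singleton w a ih =>
    intro x y h
    rw [qVal_concat] at h
    set Y : ℚ := qVal p q (x:ℚ) w with hY
    have h1 : (p:ℚ) * Y = (q:ℚ) * y - a := by
      field_simp at h; linarith [h]
    obtain ⟨z, hz⟩ := qVal_den p q hq w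
    have h2 : Y * (q:ℚ)^w.length = (((p:ℤ)^w.length * x + z : ℤ) : ℚ) := by
      rw [hY, qVal_affine, div_pow]
      push_cast
      field_simp
      nlinarith [hz]
    have hdp : (Y.den : ℤ) ∣ (p:ℤ) := by
      have : Y = Rat.divInt ((q:ℤ)*y - a) (p:ℤ) := by
        rw [Rat.divInt_eq_div]
        push_cast
        rw [eq_div_iff hp0]
        linarith [h1]
      rw [this]; exact Rat.den_dvd _ _
    have hdq : (Y.den : ℤ) ∣ ((q:ℤ)^w.length) := by
      have : Y = Rat.divInt ((p:ℤ)^w.length * x + z) ((q:ℤ)^w.length) := by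
        rw [Rat.divInt_eq_div]
        rw [eq_div_iff (by push_cast; positivity)]
        push_cast
        push_cast at h2
        exact h2
      rw [this]
      exact Rat.den_dvd _ _
    have hden : Y.den = 1 := by
      have hcop : IsCoprime ((p:ℕ):ℤ) (((q^w.length : ℕ)):ℤ) := by
        rw [Nat.isCoprime_iff_coprime]
        exact (Nat.Coprime.pow_right _ hco)
      have hd2 : (Y.den : ℤ) ∣ ((q^w.length : ℕ) : ℤ) := by push_cast; exact hdq
      have hd1 : (Y.den : ℤ) ∣ 1 := (IsCoprime.of_isCoprime_of_dvd_left hcop hdp).dvd_of_dvd_mul_left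
        (by rw [mul_one]; exact hd2)
      exact Nat.dvd_one.mp (by exact_mod_cast hd1)
    set m : ℤ := Y.num with hm
    have hYm : Y = (m:ℚ) := ((Rat.den_eq_one_iff Y).mp hden).symm
    have hwm : oval p q x w = some m := ih x m (by rw [← hY, hYm])
    have hkey : ((p:ℤ)*m + a) = (q:ℤ) * y := by
      have : (p:ℚ)*m + a = (q:ℚ)*y := by rw [← hYm]; linarith [h1]
      exact_mod_cast this
    have hdvd : (q:ℤ) ∣ ((p:ℤ)*m + a) := ⟨y, hkey⟩
    rw [oval_append p q x m w [a] hwm, oval_cons, if_pos hdvd, hkey,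
      Int.mul_ediv_cancel_left y hqz, oval_nil]

/-! ### Digit maps and the canonical words -/

def dmin (p q : ℕ) (x : ℤ) : ℤ := (-((p:ℤ)*x)) % q

def dmax (p q : ℕ) (x : ℤ) : ℤ := (p:ℤ) - 1 - (((p:ℤ)*x + p - 1) % q)

def nxt (p q : ℕ) (D : ℤ → ℤ) (x : ℤ) : ℤ := ((p:ℤ)*x + D x) / q

def W (p q : ℕ) (D : ℤ → ℤ) (x : ℤ) (m : ℕ) : ℕ := (D ((nxt p q D)^[m] x)).toNat

def mw (p q : ℕ) (D : ℤ → ℤ) (x : ℤ) (l : ℕ) : List ℕ := (List.range l).map (W p q D x)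

lemma mw_zero (p q : ℕ) (D : ℤ → ℤ) (x : ℤ) : mw p q D x 0 = [] := rfl

lemma W_succ (p q : ℕ) (D : ℤ → ℤ) (x : ℤ) (m : ℕ) :
    W p q D x (m+1) = W p q D (nxt p q D x) m := by
  unfold W
  rw [Function.iterate_succ_apply]

lemma W_add (p q : ℕ) (D : ℤ → ℤ) (x : ℤ) (m i : ℕ) :
    W p q D x (m+i) = W p q D ((nxt p q D)^[m] x) i := by
  unfold W
  rw [add_comm, Function.iterate_add_apply]

lemma mw_succ (p q : ℕ) (D : ℤ → ℤ) (x : ℤ) (l : ℕ) :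
    mw p q D x (l+1) = (D x).toNat :: mw p q D (nxt p q D x) l := by
  unfold mw
  rw [List.range_succ_eq_map, List.map_cons, List.map_map,
    show W p q D x ∘ Nat.succ = W p q D (nxt p q D x) from funext fun i => W_succ p q D x i]
  rfl

lemma mw_length (p q : ℕ) (D : ℤ → ℤ) (x : ℤ) (l : ℕ) : (mw p q D x l).length = l := by
  simp [mw]

/-- Hypotheses on a digit selector with window `[c, c+q)`. -/
def DigitSel (p q : ℕ) (c : ℕ) (D : ℤ → ℤ) : Prop :=
  c + q ≤ p ∧ ∀ x : ℤ, (c:ℤ) ≤ D x ∧ D x < c + q ∧ (q:ℤ) ∣ ((p:ℤ)*x + D x)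

lemma dmin_sel (p q : ℕ) (hq : 1 ≤ q) (hpq : q < p) : DigitSel p q 0 (dmin p q) := by
  have hqz : (q:ℤ) ≠ 0 := by exact_mod_cast (by omega : q ≠ 0)
  refine ⟨by omega, fun x => ⟨by unfold dmin; simpa using Int.emod_nonneg (-((p:ℤ)*x)) hqz, ?_, ?_⟩⟩
  · unfold dmin; simpa using Int.emod_lt_of_pos (-((p:ℤ)*x)) (by exact_mod_cast hq)
  · unfold dmin
    rw [Int.emod_def]
    refine ⟨-((-((p:ℤ)*x)) / q), ?_⟩
    ring

lemma dmax_sel (p q : ℕ) (hq : 1 ≤ q) (hpq : q < p) : DigitSel p q (p - q) (dmax p q) := by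
  have hqz : (q:ℤ) ≠ 0 := by exact_mod_cast (by omega : q ≠ 0)
  have hc : ((p - q : ℕ) : ℤ) = (p:ℤ) - q := by omega
  refine ⟨by omega, fun x => ⟨?_, ?_, ?_⟩⟩
  · rw [hc]
    have := Int.emod_lt_of_pos ((p:ℤ)*x + p - 1) (by exact_mod_cast hq : (0:ℤ) < q)
    unfold dmax; omega
  · rw [hc]
    have := Int.emod_nonneg ((p:ℤ)*x + p - 1) hqz
    unfold dmax; omega
  · unfold dmax
    rw [Int.emod_def]
    refine ⟨((p:ℤ)*x + p - 1) / q, ?_⟩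
    ring

lemma sel_nonneg {p q c : ℕ} {D : ℤ → ℤ} (hD : DigitSel p q c D) (x : ℤ) : 0 ≤ D x :=
  le_trans (by positivity) (hD.2 x).1

lemma sel_lt {p q c : ℕ} {D : ℤ → ℤ} (hD : DigitSel p q c D) (x : ℤ) : D x < p :=
  lt_of_lt_of_le (hD.2 x).2.1 (by exact_mod_cast hD.1)

lemma mw_oval {p q c : ℕ} {D : ℤ → ℤ} (hD : DigitSel p q c D) :
    ∀ (l : ℕ) (x : ℤ), oval p q x (mw p q D x l) = some ((nxt p q D)^[l] x) := by
  intro l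
  induction l with
  | zero => intro x; simp [mw_zero, oval_nil]
  | succ l ih =>
    intro x
    rw [mw_succ, oval_cons]
    have hcast : ((D x).toNat : ℤ) = D x := Int.toNat_of_nonneg (sel_nonneg hD x)
    rw [hcast, if_pos (hD.2 x).2.2]
    rw [show ((p:ℤ)*x + D x)/q = nxt p q D x from rfl]
    rw [ih (nxt p q D x), Function.iterate_succ_apply]

lemma mw_digits {p q c : ℕ} {D : ℤ → ℤ} (hD : DigitSel p q c D) (x : ℤ) (l : ℕ) :
    ∀ a ∈ mw p q D x l, c ≤ a ∧ a < c + q := by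
  intro a ha
  simp only [mw, List.mem_map, List.mem_range] at ha
  obtain ⟨i, _, rfl⟩ := ha
  have h1 := (hD.2 ((nxt p q D)^[i] x)).1
  have h2 := (hD.2 ((nxt p q D)^[i] x)).2.1
  unfold W
  omega

lemma mw_digits_lt {p q c : ℕ} {D : ℤ → ℤ} (hD : DigitSel p q c D) (x : ℤ) (l : ℕ) :
    ∀ a ∈ mw p q D x l, a < p := by
  intro a ha
  have := mw_digits hD x l a ha
  have := hD.1
  omega

/-! ### Uniqueness and extremality of canonical words -/

lemma digit_eq_sel {p q c : ℕ} {D : ℤ → ℤ} (hq : 1 ≤ q) (hD : DigitSel p q c D)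
    {x : ℤ} {a : ℕ} (hdvd : (q:ℤ) ∣ ((p:ℤ)*x + a)) (hlo : c ≤ a) (hhi : a < c + q) :
    (a : ℤ) = D x := by
  have h1 := (hD.2 x).1
  have h2 := (hD.2 x).2.1
  have h3 := (hD.2 x).2.2
  have hd : (q:ℤ) ∣ ((a:ℤ) - D x) := by
    have := dvd_sub hdvd h3
    simpa using this
  have : (a:ℤ) - D x = 0 := by
    refine Int.eq_zero_of_abs_lt_dvd hd ?_
    rw [abs_lt]
    constructor <;> [skip; skip] <;> omega
  omega

lemma window_eq_mw {p q c : ℕ} {D : ℤ → ℤ} (hq : 1 ≤ q) (hD : DigitSel p q c D) :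
    ∀ (v : List ℕ) (x : ℤ), (∀ a ∈ v, c ≤ a ∧ a < c + q) → (oval p q x v).isSome →
      v = mw p q D x v.length := by
  intro v
  induction v with
  | nil => intro x _ _; rfl
  | cons a t ih =>
    intro x hdig hsome
    obtain ⟨hdvd, hrest⟩ := oval_cons_some p q x a t hsome
    have ha := hdig a (by simp)
    have hae : (a:ℤ) = D x := digit_eq_sel hq hD hdvd ha.1 ha.2
    have hnext : ((p:ℤ)*x + a)/q = nxt p q D x := by rw [hae]; rfl
    rw [hnext] at hrest
    have htail := ih (nxt p q D x) (fun b hb => hdig b (List.mem_cons_of_mem a hb)) hrest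
    rw [List.length_cons, mw_succ]
    have hcast : ((D x).toNat : ℤ) = D x := Int.toNat_of_nonneg (sel_nonneg hD x)
    have hhead : a = (D x).toNat := by omega
    rw [← hhead, ← htail]

/-- greedy minimality -/
lemma not_lex_min (p q : ℕ) (hq : 1 ≤ q) (hpq : q < p) :
    ∀ (v : List ℕ) (x : ℤ), (oval p q x v).isSome →
      ¬ List.Lex (· < · : ℕ → ℕ → Prop) v (mw p q (dmin p q) x v.length) := by
  have hD := dmin_sel p q hq hpq
  intro v
  induction v with
  | nil => intro x _ h; rw [List.length_nil, mw_zero] at h; cases h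
  | cons a t ih =>
    intro x hsome hlex
    obtain ⟨hdvd, hrest⟩ := oval_cons_some p q x a t hsome
    rw [List.length_cons, mw_succ] at hlex
    have hcast : ((dmin p q x).toNat : ℤ) = dmin p q x :=
      Int.toNat_of_nonneg (sel_nonneg hD x)
    cases hlex with
    | rel hab =>
      -- a < (dmin x).toNat, yet a ≡ dmin x (mod q) and 0 ≤ a < dmin x < q
      have h2 := (hD.2 x).2.1
      have hd : (q:ℤ) ∣ ((a:ℤ) - dmin p q x) := by
        have := dvd_sub hdvd (hD.2 x).2.2
        simpa using this
      have : (a:ℤ) - dmin p q x = 0 := by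
        refine Int.eq_zero_of_abs_lt_dvd hd ?_
        rw [abs_lt]
        have : (a:ℤ) < dmin p q x := by omega
        have h0 : (0:ℤ) ≤ a := by positivity
        simp only [Nat.cast_zero, zero_add] at h2
        omega
      omega
    | cons htail =>
      -- head of v equals the canonical digit
      have hnext : ((p:ℤ)*x + (dmin p q x).toNat)/q = nxt p q (dmin p q) x := by
        rw [hcast]; rfl
      rw [hnext] at hrest
      exact ih (nxt p q (dmin p q) x) hrest htail

/-- greedy maximality -/
lemma not_lex_max (p q : ℕ) (hq : 1 ≤ q) (hpq : q < p) :
    ∀ (v : List ℕ) (x : ℤ), (∀ a ∈ v, a < p) → (oval p q x v).isSome →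
      ¬ List.Lex (· < · : ℕ → ℕ → Prop) (mw p q (dmax p q) x v.length) v := by
  have hD := dmax_sel p q hq hpq
  intro v
  induction v with
  | nil => intro x _ _ h; rw [List.length_nil, mw_zero] at h; cases h
  | cons a t ih =>
    intro x hdig hsome hlex
    obtain ⟨hdvd, hrest⟩ := oval_cons_some p q x a t hsome
    rw [List.length_cons, mw_succ] at hlex
    have hcast : ((dmax p q x).toNat : ℤ) = dmax p q x :=
      Int.toNat_of_nonneg (sel_nonneg hD x)
    cases hlex with
    | rel hab =>
      -- (dmax x).toNat < a, yet a ≡ dmax x (mod q) and dmax x ≥ p - q, a < p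
      have h2 := (hD.2 x).2.1
      have h1 := (hD.2 x).1
      have hap : a < p := hdig a (by simp)
      have hd : (q:ℤ) ∣ ((a:ℤ) - dmax p q x) := by
        have := dvd_sub hdvd (hD.2 x).2.2
        simpa using this
      have hcq : ((p - q : ℕ) : ℤ) = (p:ℤ) - q := by omega
      have : (a:ℤ) - dmax p q x = 0 := by
        refine Int.eq_zero_of_abs_lt_dvd hd ?_
        rw [abs_lt]
        have hgt : (dmax p q x : ℤ) < a := by omega
        have hap' : (a:ℤ) < p := by exact_mod_cast hap
        omega
      omega
    | cons htail =>
      have hnext : ((p:ℤ)*x + ((dmax p q x).toNat : ℕ))/q = nxt p q (dmax p q) x := by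
        rw [hcast]; rfl
      rw [hnext] at hrest
      exact ih (nxt p q (dmax p q) x) (fun b hb => hdig b (List.mem_cons_of_mem _ hb)) hrest htail

/-! ### `Tmap` and the successor maps -/

lemma Tmap_eq' (p q : ℕ) (hq : 1 ≤ q) {x z : ℤ}
    (h1 : (q:ℤ)*z - q < (p:ℤ)*x) (h2 : (p:ℤ)*x ≤ (q:ℤ)*z) : Tmap p q x = z := by
  have hq0 : (0:ℚ) < (q:ℚ) := by exact_mod_cast hq
  unfold Tmap
  rw [Int.ceil_eq_iff]
  constructor
  · rw [lt_div_iff₀ hq0]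
    have h1' : (q:ℚ)*(z:ℚ) - q < (p:ℚ)*x := by exact_mod_cast h1
    push_cast
    nlinarith [h1']
  · rw [div_le_iff₀ hq0]
    have h2' : (p:ℚ)*(x:ℚ) ≤ (q:ℚ)*z := by exact_mod_cast h2
    push_cast
    nlinarith [h2']

lemma nxt_min_eq (p q : ℕ) (hq : 1 ≤ q) : nxt p q (dmin p q) = Tmap p q := by
  have hqz : (q:ℤ) ≠ 0 := by exact_mod_cast (by omega : q ≠ 0)
  funext x
  have hdvd : (q:ℤ) ∣ ((p:ℤ)*x + dmin p q x) := by
    unfold dmin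
    rw [Int.emod_def]
    exact ⟨-((-((p:ℤ)*x)) / q), by ring⟩
  obtain ⟨e, he⟩ := hdvd
  have hval : nxt p q (dmin p q) x = e := by
    unfold nxt
    rw [he, Int.mul_ediv_cancel_left e hqz]
  rw [hval]
  symm
  apply Tmap_eq' p q hq
  · have h0 : (0:ℤ) ≤ dmin p q x := Int.emod_nonneg _ hqz
    have h1 : dmin p q x < q := Int.emod_lt_of_pos _ (by omega)
    omega
  · have h0 : (0:ℤ) ≤ dmin p q x := Int.emod_nonneg _ hqz
    omega

lemma nxt_max_eq (p q : ℕ) (hq : 1 ≤ q) (x : ℤ) :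
    nxt p q (dmax p q) x = Tmap p q (x+1) - 1 := by
  have hqz : (q:ℤ) ≠ 0 := by exact_mod_cast (by omega : q ≠ 0)
  have hdvd : (q:ℤ) ∣ ((p:ℤ)*x + dmax p q x) := by
    unfold dmax
    rw [Int.emod_def]
    exact ⟨((p:ℤ)*x + p - 1) / q, by ring⟩
  obtain ⟨e, he⟩ := hdvd
  have hval : nxt p q (dmax p q) x = e := by
    unfold nxt
    rw [he, Int.mul_ediv_cancel_left e hqz]
  rw [hval]
  have hT : Tmap p q (x+1) = e + 1 := by
    apply Tmap_eq' p q hq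
    · have h0 : (0:ℤ) ≤ ((p:ℤ)*x + p - 1) % q := Int.emod_nonneg _ hqz
      unfold dmax at he
      linarith [he, h0]
    · have h1 : ((p:ℤ)*x + p - 1) % q < q := Int.emod_lt_of_pos _ (by omega)
      unfold dmax at he
      linarith [he, h1]
  omega

lemma iterate_nxt_max (p q : ℕ) (hq : 1 ≤ q) :
    ∀ (m : ℕ) (n : ℤ), (nxt p q (dmax p q))^[m] n = (Tmap p q)^[m] (n+1) - 1 := by
  intro m
  induction m with
  | zero => intro n; simp
  | succ m ih =>
    intro n
    rw [Function.iterate_succ_apply, Function.iterate_succ_apply, ih, nxt_max_eq p q hq]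
    congr 2
    omega

lemma iterate_nxt_min (p q : ℕ) (hq : 1 ≤ q) (m : ℕ) (n : ℤ) :
    (nxt p q (dmin p q))^[m] n = (Tmap p q)^[m] n := by
  rw [nxt_min_eq p q hq]

/-! ### Residues and blocks -/

def rinv (p q : ℕ) (pinv : ℤ) (v : List ℕ) : ℤ :=
  v.foldr (fun a r => pinv * ((q:ℤ) * r - a)) 0

lemma exists_pinv (p q : ℕ) (hco : Nat.Coprime p q) (L : ℕ) :
    ∃ pinv : ℤ, ((q:ℤ)^L) ∣ ((p:ℤ) * pinv - 1) := by
  have hcop : IsCoprime ((p:ℕ):ℤ) (((q^L : ℕ)):ℤ) := by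
    rw [Nat.isCoprime_iff_coprime]
    exact Nat.Coprime.pow_right _ hco
  obtain ⟨u, v, huv⟩ := hcop
  refine ⟨u, ⟨-v, ?_⟩⟩
  push_cast at huv ⊢
  linarith [huv]

lemma coprime_pow_q (p q : ℕ) (hco : Nat.Coprime p q) (l : ℕ) :
    IsCoprime ((q:ℤ)^l) ((p:ℤ)) := by
  have : IsCoprime (((q^l : ℕ)):ℤ) ((p:ℕ):ℤ) := by
    rw [Nat.isCoprime_iff_coprime]
    exact Nat.Coprime.pow_left _ hco.symm
  push_cast at this
  exact this

lemma oval_isSome_iff (p q : ℕ) (hq : 1 ≤ q) (hco : Nat.Coprime p q)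
    (L : ℕ) (pinv : ℤ) (hpinv : ((q:ℤ)^L) ∣ ((p:ℤ) * pinv - 1)) :
    ∀ (v : List ℕ) (x : ℤ), v.length ≤ L →
      ((oval p q x v).isSome ↔ ((q:ℤ)^v.length) ∣ (x - rinv p q pinv v)) := by
  have hqz : (q:ℤ) ≠ 0 := by exact_mod_cast (by omega : q ≠ 0)
  intro v
  induction v with
  | nil =>
    intro x _
    simp [oval_nil, rinv]
  | cons a t ih =>
    intro x hlen
    rw [List.length_cons] at hlen
    have hlt : t.length ≤ L := by omega
    have hstep : (oval p q x (a :: t)).isSome ↔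
        ((q:ℤ) ∣ ((p:ℤ)*x + a) ∧ (oval p q (((p:ℤ)*x + a)/q) t).isSome) := by
      constructor
      · exact oval_cons_some p q x a t
      · rintro ⟨hd, hs⟩
        rw [oval_cons, if_pos hd]
        exact hs
    rw [hstep, ih _ hlt]
    have hr : rinv p q pinv (a :: t) = pinv * ((q:ℤ) * rinv p q pinv t - a) := rfl
    rw [List.length_cons, hr]
    -- claim A : dvd pair ↔ q^(t.length+1) ∣ (p x + a - q * rinv t)
    have claimA : ((q:ℤ) ∣ ((p:ℤ)*x + a) ∧ ((q:ℤ)^t.length) ∣ (((p:ℤ)*x + a)/q - rinv p q pinv t))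
        ↔ ((q:ℤ)^(t.length+1)) ∣ ((p:ℤ)*x + a - (q:ℤ) * rinv p q pinv t) := by
      constructor
      · rintro ⟨⟨m, hm⟩, hd2⟩
        have hdiv : ((p:ℤ)*x + a)/q = m := by rw [hm, Int.mul_ediv_cancel_left m hqz]
        rw [hdiv] at hd2
        obtain ⟨e, he⟩ := hd2
        refine ⟨e, ?_⟩
        rw [pow_succ']
        rw [hm]
        rw [mul_assoc, ← he]
        ring
      · rintro ⟨e, he⟩
        have hd1 : (q:ℤ) ∣ ((p:ℤ)*x + a) := by
          refine ⟨rinv p q pinv t + (q:ℤ)^t.length * e, ?_⟩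
          rw [pow_succ'] at he
          linarith [he]
        have hd1' := hd1
        obtain ⟨m, hm⟩ := hd1'
        have hdiv : ((p:ℤ)*x + a)/q = m := by rw [hm, Int.mul_ediv_cancel_left m hqz]
        rw [hdiv]
        refine ⟨hd1, ⟨e, ?_⟩⟩
        rw [pow_succ'] at he
        rw [hm] at he
        have : (q:ℤ) * (m - rinv p q pinv t) = (q:ℤ) * ((q:ℤ)^t.length * e) := by linarith [he]
        have := mul_left_cancel₀ hqz this
        linarith [this]
    rw [claimA]
    -- claim B : the two targets differ by a multiple of q^(t.length+1)
    have hLdvd : ((q:ℤ)^(t.length+1)) ∣ ((p:ℤ) * pinv - 1) :=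
      dvd_trans (pow_dvd_pow _ (by omega)) hpinv
    obtain ⟨w, hw⟩ := hLdvd
    have claimB : (p:ℤ) * (x - pinv * ((q:ℤ) * rinv p q pinv t - a))
        - ((p:ℤ)*x + a - (q:ℤ) * rinv p q pinv t)
        = (q:ℤ)^(t.length+1) * (-(w * ((q:ℤ) * rinv p q pinv t - a))) := by
      have : (p:ℤ) * pinv = (q:ℤ)^(t.length+1) * w + 1 := by linarith [hw]
      calc (p:ℤ) * (x - pinv * ((q:ℤ) * rinv p q pinv t - a))
          - ((p:ℤ)*x + a - (q:ℤ) * rinv p q pinv t)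
          = -(((p:ℤ) * pinv - 1) * ((q:ℤ) * rinv p q pinv t - a)) := by ring
        _ = (q:ℤ)^(t.length+1) * (-(w * ((q:ℤ) * rinv p q pinv t - a))) := by rw [hw]; ring
    have hdiff : ((q:ℤ)^(t.length+1)) ∣
        ((p:ℤ) * (x - pinv * ((q:ℤ) * rinv p q pinv t - a))
          - ((p:ℤ)*x + a - (q:ℤ) * rinv p q pinv t)) := ⟨_, claimB⟩
    constructor
    · intro h
      have h2 : ((q:ℤ)^(t.length+1)) ∣ (p:ℤ) * (x - pinv * ((q:ℤ) * rinv p q pinv t - a)) := by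
        have hsum := dvd_add hdiff h
        convert hsum using 1
        exacts [rfl, by ring]
      exact (coprime_pow_q p q hco (t.length+1)).dvd_of_dvd_mul_left h2
    · intro h
      have h2 : ((q:ℤ)^(t.length+1)) ∣ (p:ℤ) * (x - pinv * ((q:ℤ) * rinv p q pinv t - a)) :=
        Dvd.dvd.mul_left h _
      have hsub := dvd_sub h2 hdiff
      convert hsub using 1
      exacts [rfl, by ring]

/-! ### Language-level lemmas -/

lemma ratVal_eq (p q : ℕ) (w : List ℕ) : ratVal p q w = qVal p q 0 w := by
  unfold ratVal qVal
  rw [coeM_eq, List.foldl_map]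

lemma InLang.oval_val {p q : ℕ} (hq : 1 ≤ q) (hpq : q < p) (hco : Nat.Coprime p q)
    {u : List ℕ} (h : InLang p q u) : ∃ n : ℕ, oval p q 0 u = some (n:ℤ) := by
  obtain ⟨n, hn⟩ := h.2.1
  refine ⟨n, qVal_int_oval p q hq hpq hco u 0 (n:ℤ) ?_⟩
  rw [show ((0:ℤ):ℚ) = (0:ℚ) by norm_cast, ← ratVal_eq, hn]
  norm_cast

lemma inLang_of {p q : ℕ} (hq : 1 ≤ q) {u : List ℕ} {m : ℤ}
    (hdig : ∀ a ∈ u, a < p) (hhead : u.head? ≠ some 0)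
    (h : oval p q 0 u = some m) (hm : 0 ≤ m) : InLang p q u := by
  refine ⟨hdig, ⟨m.toNat, ?_⟩, hhead⟩
  rw [ratVal_eq]
  have := oval_qVal p q hq u 0 m h
  rw [show ((0:ℤ):ℚ) = (0:ℚ) by norm_cast] at this
  rw [this]
  rw [show ((m.toNat : ℕ) : ℚ) = ((m.toNat : ℤ) : ℚ) by norm_cast, Int.toNat_of_nonneg hm]

lemma nxt_iter_nonneg {p q c : ℕ} {D : ℤ → ℤ} (hD : DigitSel p q c D) :
    ∀ (l : ℕ) (n : ℤ), 0 ≤ n → 0 ≤ (nxt p q D)^[l] n := by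
  intro l
  induction l with
  | zero => intro n h; simpa using h
  | succ l ih =>
    intro n h
    rw [Function.iterate_succ_apply]
    refine ih _ ?_
    exact Int.ediv_nonneg (add_nonneg (by positivity) (sel_nonneg hD n)) (by positivity)

lemma inLang_append_mw {p q c : ℕ} {D : ℤ → ℤ} (hq : 1 ≤ q) (hD : DigitSel p q c D)
    {u : List ℕ} {n : ℤ} {l : ℕ}
    (hu : InLang p q u) (hn : oval p q 0 u = some n) (hn0 : 0 ≤ n)
    (hne : u = [] → (l = 0 ∨ 1 ≤ c)) : InLang p q (u ++ mw p q D n l) := by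
  have hoval : oval p q 0 (u ++ mw p q D n l) = some ((nxt p q D)^[l] n) := by
    rw [oval_append p q 0 n u _ hn]
    exact mw_oval hD l n
  refine inLang_of hq ?_ ?_ hoval (nxt_iter_nonneg hD l n hn0)
  · intro a ha
    rcases List.mem_append.mp ha with h | h
    · exact hu.1 a h
    · exact mw_digits_lt hD n l a h
  · cases u with
    | cons b t =>
      have := hu.2.2
      simpa using this
    | nil =>
      rcases hne rfl with h | h
      · subst h
        simp [mw_zero]
      · cases l with
        | zero => simp [mw_zero]
        | succ l =>
          rw [List.nil_append, mw_succ]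
          have h1 := (hD.2 n).1
          have : 1 ≤ (D n).toNat := by omega
          simp only [List.head?_cons, ne_eq, Option.some.injEq]
          omega

lemma isWmin_canonical (p q : ℕ) (hq : 1 ≤ q) (hpq : q < p) (hco : Nat.Coprime p q)
    {u : List ℕ} {n : ℤ} (l : ℕ) (hu : InLang p q u) (hune : u ≠ [])
    (hn : oval p q 0 u = some n) (hn0 : 0 ≤ n) :
    (mw p q (dmin p q) n l).length = l ∧ InLang p q (u ++ mw p q (dmin p q) n l) ∧
      ∀ v' : List ℕ, v'.length = l → InLang p q (u ++ v') →
        ¬ List.Lex (· < · : ℕ → ℕ → Prop) v' (mw p q (dmin p q) n l) := by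
  have hD := dmin_sel p q hq hpq
  refine ⟨mw_length p q _ n l, inLang_append_mw hq hD hu hn hn0 (fun h => absurd h hune), ?_⟩
  intro v' hlen hv'
  obtain ⟨m', hm'⟩ := InLang.oval_val hq hpq hco hv'
  obtain ⟨y, hy, hyv⟩ := oval_append_some p q 0 (m':ℤ) u v' hm'
  rw [hn] at hy
  cases hy
  have := not_lex_min p q hq hpq v' n (by rw [hyv]; rfl)
  rwa [hlen] at this

lemma isWmax_canonical (p q : ℕ) (hq : 1 ≤ q) (hpq : q < p) (hco : Nat.Coprime p q)
    {u : List ℕ} {n : ℤ} (l : ℕ) (hu : InLang p q u)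
    (hn : oval p q 0 u = some n) (hn0 : 0 ≤ n) :
    (mw p q (dmax p q) n l).length = l ∧ InLang p q (u ++ mw p q (dmax p q) n l) ∧
      ∀ v' : List ℕ, v'.length = l → InLang p q (u ++ v') →
        ¬ List.Lex (· < · : ℕ → ℕ → Prop) (mw p q (dmax p q) n l) v' := by
  have hD := dmax_sel p q hq hpq
  refine ⟨mw_length p q _ n l, inLang_append_mw hq hD hu hn hn0 (fun _ => Or.inr (by omega)), ?_⟩
  intro v' hlen hv'
  obtain ⟨m', hm'⟩ := InLang.oval_val hq hpq hco hv'
  obtain ⟨y, hy, hyv⟩ := oval_append_some p q 0 (m':ℤ) u v' hm'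
  rw [hn] at hy
  cases hy
  have hdig : ∀ a ∈ v', a < p := fun a ha => hv'.1 a (List.mem_append.mpr (Or.inr ha))
  have := not_lex_max p q hq hpq v' n hdig (by rw [hyv]; rfl)
  rwa [hlen] at this

lemma lex_eq : ∀ v v' : List ℕ, v.length = v'.length →
    ¬ List.Lex (· < · : ℕ → ℕ → Prop) v v' → ¬ List.Lex (· < · : ℕ → ℕ → Prop) v' v →
    v = v' := by
  intro v
  induction v with
  | nil =>
    intro v' hlen _ _
    cases v' with
    | nil => rfl
    | cons b s => exact absurd hlen (by simp)
  | cons a t ih =>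
    intro v' hlen h1 h2
    cases v' with
    | nil => exact absurd hlen (by simp)
    | cons b s =>
      rcases Nat.lt_trichotomy a b with h | h | h
      · exact absurd (List.Lex.rel h) h1
      · subst h
        have ht : t = s := by
          refine ih s (by simpa using hlen) ?_ ?_
          · exact fun hx => h1 (List.Lex.cons hx)
          · exact fun hx => h2 (List.Lex.cons hx)
        rw [ht]
      · exact absurd (List.Lex.rel h) h2

/-! ### Representation of integers -/

lemma exists_rep (p q : ℕ) (hq : 1 ≤ q) (hpq : q < p) :
    ∀ n : ℕ, ∃ u : List ℕ, (∀ a ∈ u, a < p) ∧ u.head? ≠ some 0 ∧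
      (n = 0 → u = []) ∧ oval p q 0 u = some (n:ℤ) := by
  intro n
  induction n using Nat.strong_induction_on with
  | _ n ih =>
    rcases Nat.eq_zero_or_pos n with rfl | hn
    · exact ⟨[], by simp, by simp, fun _ => rfl, by rw [oval_nil]; norm_cast⟩
    · have hp0 : 0 < p := by omega
      set x := q * n / p with hxdef
      set a := q * n % p with hadef
      have hxn : x < n := by
        exact Nat.div_lt_of_lt_mul (Nat.mul_lt_mul_of_pos_right hpq hn)
      obtain ⟨u', h1, h2, h3, h4⟩ := ih x hxn
      have hmod : p * x + a = q * n := by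
        rw [hxdef, hadef]
        exact Nat.div_add_mod (q * n) p
      have hdvd : (q:ℤ) ∣ ((p:ℤ) * (x:ℤ) + (a:ℤ)) := by
        refine ⟨(n:ℤ), ?_⟩
        exact_mod_cast hmod
      refine ⟨u' ++ [a], ?_, ?_, fun h => absurd h (by omega), ?_⟩
      · intro b hb
        rcases List.mem_append.mp hb with h | h
        · exact h1 b h
        · rw [List.mem_singleton] at h
          subst h
          exact Nat.mod_lt _ hp0
      · cases u' with
        | cons c t => simpa using h2
        | nil =>
          have hx0 : x = 0 := by
            rw [oval_nil] at h4
            have : (0:ℤ) = (x:ℤ) := Option.some.inj h4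
            exact_mod_cast this.symm
          have hlt : q * n < p := by
            rw [hxdef] at hx0
            exact (Nat.div_eq_zero_iff.mp hx0).resolve_left (by omega)
          have ha : a = q * n := by
            rw [hadef]
            exact Nat.mod_eq_of_lt hlt
          have : a ≠ 0 := by
            rw [ha]
            have : 1 ≤ q * n := Nat.one_le_iff_ne_zero.mpr (by positivity)
            omega
          simpa using this
      · rw [oval_append p q 0 (x:ℤ) u' [a] h4, oval_cons, if_pos hdvd]
        have : ((p:ℤ) * (x:ℤ) + (a:ℤ)) = (q:ℤ) * (n:ℤ) := by exact_mod_cast hmod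
        rw [this, Int.mul_ediv_cancel_left _ (by exact_mod_cast (by omega : q ≠ 0)), oval_nil]

/-! ### Blocks and residues -/

lemma block_eq (p q : ℕ) (D : ℤ → ℤ) (n : ℤ) (m l : ℕ) :
    (List.range l).map (fun i => W p q D n (m+i)) = mw p q D ((nxt p q D)^[m] n) l := by
  unfold mw
  apply List.map_congr_left
  intro i _
  exact W_add p q D n m i

lemma block_iff {p q c : ℕ} {D : ℤ → ℤ} (hq : 1 ≤ q) (hco : Nat.Coprime p q)
    (hD : DigitSel p q c D) {L : ℕ} {pinv : ℤ} (hpinv : ((q:ℤ)^L) ∣ ((p:ℤ) * pinv - 1))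
    {v : List ℕ} {l : ℕ} (hvdig : ∀ a ∈ v, c ≤ a ∧ a < c + q) (hlen : v.length = l)
    (hlL : l ≤ L) (y : ℤ) :
    mw p q D y l = v ↔ ((q:ℤ)^l) ∣ (y - rinv p q pinv v) := by
  have hiff := oval_isSome_iff p q hq hco L pinv hpinv v y (by omega)
  rw [hlen] at hiff
  rw [← hiff]
  constructor
  · intro h
    rw [← h]
    rw [mw_oval hD l y]
    rfl
  · intro h
    have := window_eq_mw hq hD v y hvdig h
    rw [hlen] at this
    exact this.symm

lemma dvd_sub_iff_int {Q A B : ℤ} (h : Q ∣ (A - B)) : Q ∣ A ↔ Q ∣ B := by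
  constructor
  · intro hA
    have := dvd_sub hA h
    simpa using this
  · intro hB
    have := dvd_add h hB
    simpa using this

lemma emod_char {Q y : ℤ} (hQ : 0 < Q) (r : ℕ) (hr : (r:ℤ) < Q) :
    (Q ∣ (y - (r:ℤ))) ↔ y % Q = (r:ℤ) := by
  constructor
  · intro h
    have h1 : y % Q = (r:ℤ) % Q := Int.emod_eq_emod_iff_emod_sub_eq_zero.mpr
      (Int.emod_eq_zero_of_dvd h)
    rw [h1, Int.emod_eq_of_lt (by positivity) hr]
  · intro h
    have h1 : y % Q = (r:ℤ) % Q := by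
      rw [h, Int.emod_eq_of_lt (by positivity) hr]
    have := Int.emod_eq_emod_iff_emod_sub_eq_zero.mp h1
    exact Int.dvd_of_emod_eq_zero this

/-- the positivity of the value for nonempty words of the language -/
lemma val_pos (p q : ℕ) (hq : 1 ≤ q) (hpq : q < p) {u : List ℕ} {n : ℤ}
    (hu : InLang p q u) (hune : u ≠ []) (hn : oval p q 0 u = some n) : 1 ≤ n := by
  cases u with
  | nil => exact absurd rfl hune
  | cons a t =>
    have hqz : (q:ℤ) ≠ 0 := by exact_mod_cast (by omega : q ≠ 0)
    rw [oval_cons] at hn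
    by_cases hd : (q:ℤ) ∣ ((p:ℤ)*0 + a)
    · rw [if_pos hd] at hn
      have hd' : (q:ℤ) ∣ (a:ℤ) := by simpa using hd
      have ha0 : a ≠ 0 := by
        intro h
        exact hu.2.2 (by simp [h])
      have haq : (q:ℤ) ≤ (a:ℤ) := by
        obtain ⟨e, he⟩ := hd'
        have : 1 ≤ e := by nlinarith [he, (by exact_mod_cast Nat.one_le_iff_ne_zero.mpr ha0 : (1:ℤ) ≤ (a:ℤ)), (by exact_mod_cast hq : (1:ℤ) ≤ (q:ℤ))]
        nlinarith [he, this, (by exact_mod_cast hq : (1:ℤ) ≤ (q:ℤ))]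
      have hx1 : 1 ≤ ((p:ℤ)*0 + a)/q := by
        rw [show (p:ℤ)*0 + (a:ℤ) = (a:ℤ) by ring]
        obtain ⟨e, he⟩ := hd'
        rw [he, Int.mul_ediv_cancel_left e hqz]
        nlinarith [he, haq, (by exact_mod_cast hq : (1:ℤ) ≤ (q:ℤ))]
      exact oval_pos p q hq hpq t _ n hn hx1
    · rw [if_neg hd] at hn
      exact absurd hn (by simp)

lemma map_range_head_eq {w w' : ℕ → ℕ} {m : ℕ}
    (h : (List.range (m+1)).map w = (List.range (m+1)).map w') : w m = w' m := by
  have := congrArg (fun l : List ℕ => l[m]?) h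
  simp only [List.getElem?_map, List.getElem?_range (Nat.lt_succ_self m)] at this
  simpa using this

/-! ### Count transfer -/

lemma count_transfer {P Q : ℕ → Prop} [DecidablePred P] [DecidablePred Q]
    (h : ∀ m, P m ↔ Q m) :
    (fun N => ((((Finset.range N).filter P).card : ℝ)) / N)
      = fun N => ((((Finset.range N).filter Q).card : ℝ)) / N := by
  funext N
  rw [Finset.filter_congr (fun m _ => h m)]

lemma block_residue {p q c : ℕ} {D : ℤ → ℤ} (hq : 1 ≤ q) (hco : Nat.Coprime p q)
    (hD : DigitSel p q c D) {l : ℕ} {pinv : ℤ}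
    (hpinv : ((q:ℤ)^l) ∣ ((p:ℤ) * pinv - 1))
    {v : List ℕ} (hvdig : ∀ a ∈ v, c ≤ a ∧ a < c + q) (hlen : v.length = l)
    {r : ℕ} (hr : (r:ℤ) < (q:ℤ)^l)
    (hrv : ((q:ℤ)^l) ∣ ((r:ℤ) - rinv p q pinv v)) (y : ℤ) :
    mw p q D y l = v ↔ y % ((q:ℤ)^l) = (r:ℤ) := by
  have hQ : (0:ℤ) < (q:ℤ)^l := by
    have : (0:ℤ) < (q:ℤ) := by exact_mod_cast hq
    positivity
  rw [block_iff hq hco hD hpinv hvdig hlen (le_refl l) y]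
  have hshift : ((q:ℤ)^l) ∣ ((y - rinv p q pinv v) - (y - (r:ℤ))) := by
    have : (y - rinv p q pinv v) - (y - (r:ℤ)) = (r:ℤ) - rinv p q pinv v := by ring
    rw [this]
    exact hrv
  rw [dvd_sub_iff_int hshift]
  exact emod_char hQ r hr

lemma tendsto_count_all {P : ℕ → Prop} [DecidablePred P] (hP : ∀ m, P m) :
    Filter.Tendsto (fun N => ((((Finset.range N).filter P).card : ℝ)) / N)
      Filter.atTop (nhds 1) := by
  apply Filter.Tendsto.congr' _ (tendsto_const_nhds (x := (1:ℝ)))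
  filter_upwards [Filter.eventually_ge_atTop 1] with N hN
  rw [Finset.filter_true_of_mem (fun m _ => hP m), Finset.card_range,
    div_self (by exact_mod_cast (by omega : N ≠ 0) : (N:ℝ) ≠ 0)]

lemma tendsto_transfer {P Q : ℕ → Prop} [inst1 : DecidablePred P] [inst2 : DecidablePred Q]
    (h : ∀ m, P m ↔ Q m) {a b : ℝ} (hab : a = b)
    (ht : Filter.Tendsto (fun N => ((((Finset.range N).filter P).card : ℝ)) / N)
      Filter.atTop (nhds a)) :
    Filter.Tendsto (fun N => ((((Finset.range N).filter Q).card : ℝ)) / N)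
      Filter.atTop (nhds b) := by
  rw [← count_transfer h, ← hab]
  exact ht

end S13

/-- For coprime `p > q ≥ 1`, the following are equivalent:
(i) every infinite maximal word `wmax_{p/q}(u)` (`u ∈ L_{p/q}`) is normal over `{p-q,…,p-1}`
and every infinite minimal word `wmin_{p/q}(u)` (`u ∈ L_{p/q}` nonempty) is normal over
`{0,…,q-1}`; (ii) for every positive integer `n` and every `k ∈ ℕ`, the sequence
`(T_{p/q}^l(n))_l` is equidistributed in the residue classes modulo `q^k`. -/
theorem stmt13 (p q : ℕ) (hq : 1 ≤ q) (hpq : q < p) (hco : Nat.Coprime p q) :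
    ((∀ (u : List ℕ) (w : ℕ → ℕ), InLang p q u → IsWmaxInf p q u w →
        NormalOver w (Finset.Ico (p - q) p)) ∧
     (∀ (u : List ℕ) (w : ℕ → ℕ), InLang p q u → u ≠ [] → IsWminInf p q u w →
        NormalOver w (Finset.range q))) ↔
    (∀ n : ℤ, 0 < n → ∀ k : ℕ,
        EquidistributedMod (fun l => (Tmap p q)^[l] n) (q ^ k)) := by
  have hqz : (q:ℤ) ≠ 0 := by exact_mod_cast (by omega : q ≠ 0)
  constructor
  · rintro ⟨hmaxN, hminN⟩ n hn k
    rcases Nat.eq_zero_or_pos k with rfl | hk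
    · intro r hr
      have hr0 : r = 0 := by
        have : q^0 = 1 := pow_zero q
        omega
      subst hr0
      rw [show (1/((q^0:ℕ):ℝ)) = 1 by norm_num]
      exact S13.tendsto_count_all (fun m => by norm_num [Int.emod_one])
    · have hn0' : (0:ℤ) ≤ n := le_of_lt hn
      obtain ⟨u, hud, huh, _, huo⟩ := S13.exists_rep p q hq hpq n.toNat
      rw [Int.toNat_of_nonneg hn0'] at huo
      have hu : InLang p q u := S13.inLang_of hq hud huh huo hn0'
      have hune : u ≠ [] := by
        intro h; subst h
        rw [S13.oval_nil] at huo
        have : (0:ℤ) = n := Option.some.inj huo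
        omega
      have hD := S13.dmin_sel p q hq hpq
      have hWinf : IsWminInf p q u (S13.W p q (S13.dmin p q) n) := fun l =>
        S13.isWmin_canonical p q hq hpq hco l hu hune huo hn0'
      have hnorm := hminN u _ hu hune hWinf
      intro r hr
      obtain ⟨pinv, hpinv⟩ := S13.exists_pinv p q hco k
      set v := S13.mw p q (S13.dmin p q) (r:ℤ) k with hvdef
      have hvlen : v.length = k := S13.mw_length p q _ _ k
      have hvwin : ∀ a ∈ v, 0 ≤ a ∧ a < 0 + q := S13.mw_digits hD _ k
      have hrQ : ((r:ℕ):ℤ) < (q:ℤ)^k := by exact_mod_cast hr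
      have hrv : ((q:ℤ)^k) ∣ ((r:ℤ) - S13.rinv p q pinv v) := by
        have hs : (S13.oval p q (r:ℤ) v).isSome := by
          rw [hvdef, S13.mw_oval hD k]; rfl
        have h2 := (S13.oval_isSome_iff p q hq hco k pinv hpinv v (r:ℤ)
          (by rw [hvlen])).mp hs
        rwa [hvlen] at h2
      have hiff : ∀ m : ℕ,
          (((List.range k).map (fun i => S13.W p q (S13.dmin p q) n (m+i))) = v)
          ↔ ((Tmap p q)^[m] n % ((q^k : ℕ):ℤ) = (r:ℤ)) := by
        intro m
        rw [S13.block_eq p q _ n m k,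
          S13.block_residue hq hco hD hpinv hvwin hvlen hrQ hrv,
          S13.iterate_nxt_min p q hq m n,
          show ((q^k : ℕ):ℤ) = (q:ℤ)^k by push_cast; ring]
      have htend := hnorm.2 k hk v hvlen
        (fun a ha => Finset.mem_range.mpr (by have := hvwin a ha; omega))
      exact S13.tendsto_transfer hiff (by rw [Finset.card_range]; push_cast; ring) htend
  · intro hequi
    constructor
    · -- maximal words are normal
      intro u w hu hWinf
      obtain ⟨n0, hn⟩ := S13.InLang.oval_val hq hpq hco hu
      have hn0 : (0:ℤ) ≤ (n0:ℤ) := by positivity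
      have hD := S13.dmax_sel p q hq hpq
      have hweq : ∀ m, w m = S13.W p q (S13.dmax p q) (n0:ℤ) m := by
        intro m
        have h1 := hWinf (m+1)
        have h2 := S13.isWmax_canonical p q hq hpq hco (m+1) hu hn hn0
        have heq : (List.range (m+1)).map w = S13.mw p q (S13.dmax p q) (n0:ℤ) (m+1) := by
          apply S13.lex_eq
          · rw [S13.mw_length]; simp
          · exact h1.2.2 _ (S13.mw_length p q _ _ _) h2.2.1
          · exact h2.2.2 _ h1.1 h1.2.1
        exact S13.map_range_head_eq heq
      have hwfun : w = S13.W p q (S13.dmax p q) (n0:ℤ) := funext hweq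
      subst hwfun
      constructor
      · intro m
        have h1 := (hD.2 ((S13.nxt p q (S13.dmax p q))^[m] (n0:ℤ))).1
        have h2 := (hD.2 ((S13.nxt p q (S13.dmax p q))^[m] (n0:ℤ))).2.1
        have h3 := hD.1
        refine Finset.mem_Ico.mpr ⟨?_, ?_⟩
        · unfold S13.W; omega
        · unfold S13.W; omega
      · intro l hl v hvlen hvdig
        obtain ⟨pinv, hpinv⟩ := S13.exists_pinv p q hco l
        have hQpos : (0:ℤ) < (q:ℤ)^l := by positivity
        have hvwin : ∀ a ∈ v, p - q ≤ a ∧ a < (p-q) + q := by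
          intro a ha
          have := Finset.mem_Ico.mp (hvdig a ha)
          omega
        set r0 := (S13.rinv p q pinv v + 1) % ((q:ℤ)^l) with hr0def
        have hr00 : 0 ≤ r0 := Int.emod_nonneg _ (by positivity)
        have hr0Q : r0 < (q:ℤ)^l := Int.emod_lt_of_pos _ hQpos
        set r := r0.toNat with hrdef
        have hrcast : (r:ℤ) = r0 := Int.toNat_of_nonneg hr00
        have hrlt : r < q^l := by
          zify
          push_cast
          rw [hrcast]
          exact hr0Q
        have hiff : ∀ m : ℕ,
            (((List.range l).map (fun i => S13.W p q (S13.dmax p q) (n0:ℤ) (m+i))) = v)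
            ↔ ((Tmap p q)^[m] ((n0:ℤ)+1) % ((q^l : ℕ):ℤ) = (r:ℤ)) := by
          intro m
          rw [S13.block_eq p q _ _ m l,
            S13.block_iff hq hco hD hpinv hvwin hvlen (le_refl l),
            S13.iterate_nxt_max p q hq m (n0:ℤ)]
          have hshift : ((q:ℤ)^l) ∣ (((Tmap p q)^[m] ((n0:ℤ)+1) - 1 - S13.rinv p q pinv v)
              - ((Tmap p q)^[m] ((n0:ℤ)+1) - (r:ℤ))) := by
            have heq2 : ((Tmap p q)^[m] ((n0:ℤ)+1) - 1 - S13.rinv p q pinv v)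
                - ((Tmap p q)^[m] ((n0:ℤ)+1) - (r:ℤ))
                = r0 - (S13.rinv p q pinv v + 1) := by
              rw [hrcast]; ring
            rw [heq2, hr0def]
            exact ⟨-((S13.rinv p q pinv v + 1) / ((q:ℤ)^l)), by rw [Int.emod_def]; ring⟩
          rw [S13.dvd_sub_iff_int hshift,
            S13.emod_char hQpos r (by rw [hrcast]; exact hr0Q),
            show ((q^l : ℕ):ℤ) = (q:ℤ)^l by push_cast; ring]
        have htend := hequi ((n0:ℤ)+1) (by omega) l r hrlt
        refine S13.tendsto_transfer (fun m => (hiff m).symm) ?_ htend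
        rw [Nat.card_Ico, show p - (p - q) = q by omega]
        push_cast
        ring
    · -- minimal words are normal
      intro u w hu hune hWinf
      obtain ⟨n0, hn⟩ := S13.InLang.oval_val hq hpq hco hu
      have hn1 : (1:ℤ) ≤ (n0:ℤ) := S13.val_pos p q hq hpq hu hune hn
      have hn0 : (0:ℤ) ≤ (n0:ℤ) := by positivity
      have hD := S13.dmin_sel p q hq hpq
      have hweq : ∀ m, w m = S13.W p q (S13.dmin p q) (n0:ℤ) m := by
        intro m
        have h1 := hWinf (m+1)
        have h2 := S13.isWmin_canonical p q hq hpq hco (m+1) hu hune hn hn0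
        have heq : (List.range (m+1)).map w = S13.mw p q (S13.dmin p q) (n0:ℤ) (m+1) := by
          apply S13.lex_eq
          · rw [S13.mw_length]; simp
          · exact h2.2.2 _ h1.1 h1.2.1
          · exact h1.2.2 _ (S13.mw_length p q _ _ _) h2.2.1
        exact S13.map_range_head_eq heq
      have hwfun : w = S13.W p q (S13.dmin p q) (n0:ℤ) := funext hweq
      subst hwfun
      constructor
      · intro m
        have h2 := (hD.2 ((S13.nxt p q (S13.dmin p q))^[m] (n0:ℤ))).2.1
        refine Finset.mem_range.mpr ?_
        unfold S13.W; omega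
      · intro l hl v hvlen hvdig
        obtain ⟨pinv, hpinv⟩ := S13.exists_pinv p q hco l
        have hQpos : (0:ℤ) < (q:ℤ)^l := by positivity
        have hvwin : ∀ a ∈ v, 0 ≤ a ∧ a < 0 + q := by
          intro a ha
          have := Finset.mem_range.mp (hvdig a ha)
          omega
        set r0 := (S13.rinv p q pinv v) % ((q:ℤ)^l) with hr0def
        have hr00 : 0 ≤ r0 := Int.emod_nonneg _ (by positivity)
        have hr0Q : r0 < (q:ℤ)^l := Int.emod_lt_of_pos _ hQpos
        set r := r0.toNat with hrdef
        have hrcast : (r:ℤ) = r0 := Int.toNat_of_nonneg hr00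
        have hrlt : r < q^l := by
          zify
          push_cast
          rw [hrcast]
          exact hr0Q
        have hrv : ((q:ℤ)^l) ∣ ((r:ℤ) - S13.rinv p q pinv v) := by
          rw [hrcast, hr0def]
          exact ⟨-((S13.rinv p q pinv v) / ((q:ℤ)^l)), by rw [Int.emod_def]; ring⟩
        have hiff : ∀ m : ℕ,
            (((List.range l).map (fun i => S13.W p q (S13.dmin p q) (n0:ℤ) (m+i))) = v)
            ↔ ((Tmap p q)^[m] (n0:ℤ) % ((q^l : ℕ):ℤ) = (r:ℤ)) := by
          intro m
          rw [S13.block_eq p q _ _ m l,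
            S13.block_residue hq hco hD hpinv hvwin hvlen (by rw [hrcast]; exact hr0Q) hrv,
            S13.iterate_nxt_min p q hq m (n0:ℤ),
            show ((q^l : ℕ):ℤ) = (q:ℤ)^l by push_cast; ring]
        have htend := hequi (n0:ℤ) (by omega) l r hrlt
        refine S13.tendsto_transfer (fun m => (hiff m).symm) ?_ htend
        rw [Finset.card_range]
        push_cast
        ring
end

section
/- Let p > q ≥ 2 be coprime integers with p < q². If for every nonempty u ∈ L_{p/q} the infinite word wmin_{p/q}(u) is normal over the alphabet {0,…,q−1}, then there exists no real number x > 0 such that the fractional part of x·(p/q)^n lies in [0, 1/q) for every natural number n. -/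
private def rvStep (p q : ℕ) : ℚ → ℚ → ℚ := fun x a => (p:ℚ)/q * x + a/q

private def coeL (w : List ℕ) : List ℚ := w.map (fun a : ℕ => (a:ℚ))

private lemma coeL_nil : coeL [] = [] := rfl
private lemma coeL_cons (a : ℕ) (w : List ℕ) : coeL (a :: w) = (a:ℚ) :: coeL w := rfl
private lemma coeL_append (u v : List ℕ) : coeL (u ++ v) = coeL u ++ coeL v :=
  List.map_append
private lemma coeL_length (w : List ℕ) : (coeL w).length = w.length :=
  List.length_map _

private lemma bindcast (w : List ℕ) :
    (Bind.bind w fun a => Pure.pure ((a : ℚ))) = coeL w := by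
  induction w with
  | nil => rfl
  | cons a t ih =>
    show (a:ℚ) :: (Bind.bind t fun a => Pure.pure ((a:ℚ))) = (a:ℚ) :: coeL t
    rw [ih]

private lemma ratVal_eq (p q : ℕ) (w : List ℕ) :
    ratVal p q w = (coeL w).foldl (rvStep p q) 0 :=
  congrArg (fun l => l.foldl (rvStep p q) 0) (bindcast w)

private lemma rv_foldl (p q : ℕ) : ∀ (v : List ℚ) (x : ℚ),
    v.foldl (rvStep p q) x = ((p:ℚ)/q) ^ v.length * x + v.foldl (rvStep p q) 0
  | [], x => by simp
  | a :: v, x => by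
    simp only [List.foldl_cons, List.length_cons]
    rw [rv_foldl p q v (rvStep p q x a), rv_foldl p q v (rvStep p q 0 a)]
    simp only [rvStep]
    ring

private lemma ratVal_append (p q : ℕ) (u v : List ℕ) :
    ratVal p q (u ++ v) = ((p:ℚ)/q) ^ v.length * ratVal p q u + ratVal p q v := by
  rw [ratVal_eq, ratVal_eq, ratVal_eq, coeL_append, List.foldl_append, rv_foldl,
    coeL_length]

private lemma ratVal_nil (p q : ℕ) : ratVal p q [] = 0 := rfl

private lemma ratVal_singleton (p q : ℕ) (a : ℕ) : ratVal p q [a] = (a:ℚ)/q := by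
  rw [ratVal_eq]
  show List.foldl _ _ ((a:ℚ) :: []) = _
  simp [rvStep]

private lemma ratVal_snoc (p q : ℕ) (u : List ℕ) (a : ℕ) :
    ratVal p q (u ++ [a]) = (p:ℚ)/q * ratVal p q u + (a:ℚ)/q := by
  rw [ratVal_append, ratVal_singleton]
  simp

private lemma ratVal_cons (p q : ℕ) (a : ℕ) (v : List ℕ) :
    ratVal p q (a :: v) = ((p:ℚ)/q) ^ v.length * ((a:ℚ)/q) + ratVal p q v := by
  rw [ratVal_eq, ratVal_eq, coeL_cons, List.foldl_cons, rv_foldl, coeL_length]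
  have : rvStep p q 0 (a:ℚ) = (a:ℚ)/q := by simp [rvStep]
  rw [this]

private lemma val_den (p q : ℕ) (hq : (q:ℚ) ≠ 0) : ∀ v : List ℕ,
    ∃ z : ℕ, (q:ℚ) ^ v.length * ratVal p q v = (z:ℚ)
  | [] => ⟨0, by simp [ratVal_nil]⟩
  | a :: v => by
    obtain ⟨z, hz⟩ := val_den p q hq v
    refine ⟨a * p ^ v.length + q * z, ?_⟩
    have h1 : (q:ℚ)^(v.length+1) * ((p:ℚ)^v.length/(q:ℚ)^v.length * ((a:ℚ)/q))
        = (a:ℚ) * (p:ℚ)^v.length := by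
      rw [pow_succ]; field_simp
    rw [List.length_cons, ratVal_cons, div_pow, mul_add, h1]
    push_cast
    linear_combination (q:ℚ) * hz

private lemma head?_append_left {u : List ℕ} (v : List ℕ) (h : u ≠ []) :
    (u ++ v).head? = u.head? := by
  cases u with
  | nil => exact absurd rfl h
  | cons a t => rfl

private lemma digit_forced (p q : ℕ) (hq2 : 2 ≤ q) (hco : Nat.Coprime p q)
    (u t : List ℕ) (n b m : ℕ)
    (hu : ratVal p q u = (n:ℚ)) (hm : ratVal p q (u ++ b :: t) = (m:ℚ)) :
    q ∣ p * n + b := by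
  have hq0 : (q:ℚ) ≠ 0 := Nat.cast_ne_zero.2 (by omega)
  obtain ⟨z, hz⟩ := val_den p q hq0 t
  have h1 : (m:ℚ) = ((p:ℚ)/q) ^ t.length * ((p:ℚ)/q * n + (b:ℚ)/q) + ratVal p q t := by
    rw [← hm, List.append_cons, ratVal_append, ratVal_snoc, hu]
  have h2 : (m:ℚ) * (q:ℚ)^(t.length+1)
      = (p:ℚ)^t.length * ((p:ℚ)*n + b) + (q:ℚ) * ((q:ℚ)^t.length * ratVal p q t) := by
    rw [h1, div_pow]
    field_simp
    ring
  rw [hz] at h2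
  have h3 : m * q^(t.length+1) = p^t.length * (p*n + b) + q*z := by exact_mod_cast h2
  have h4 : q ∣ p^t.length * (p*n+b) := by
    have he : p^t.length*(p*n+b) = m*q^(t.length+1) - q*z := by omega
    rw [he]
    exact Nat.dvd_sub ⟨m*q^t.length, by ring⟩ ⟨z, rfl⟩
  exact Nat.Coprime.dvd_of_dvd_mul_left (hco.symm.pow_right _) (by rwa [mul_comm] at h4)

private lemma range_map_succ' (w : ℕ → ℕ) (l : ℕ) :
    (List.range (l+1)).map w = w 0 :: (List.range l).map (fun i => w (i+1)) := by
  rw [List.range_succ_eq_map, List.map_cons, List.map_map]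
  rfl

private lemma wmin_min (p q : ℕ) (hq2 : 2 ≤ q) (hco : Nat.Coprime p q) :
    ∀ (l : ℕ) (u : List ℕ) (Y w : ℕ → ℕ),
      ratVal p q u = (Y 0 : ℚ) →
      (∀ j, w j < q ∧ p * Y j + w j = q * Y (j+1)) →
      ∀ v' : List ℕ, v'.length = l → InLang p q (u ++ v') →
        ¬ List.Lex (· < · : ℕ → ℕ → Prop) v' ((List.range l).map w)
  | 0, u, Y, w, hY, hstep, v', hlen, hin => by
    rw [List.length_eq_zero_iff] at hlen
    subst hlen
    intro h
    simp only [List.range_zero, List.map_nil] at h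
    cases h
  | (l+1), u, Y, w, hY, hstep, v', hlen, hin => by
    cases v' with
    | nil => simp at hlen
    | cons b t =>
      rw [range_map_succ' w l]
      intro hlex
      have hstep0 := hstep 0
      cases hlex with
      | rel hb =>
        obtain ⟨m, hm⟩ := hin.2.1
        have hdvd1 : q ∣ p * Y 0 + b :=
          digit_forced p q hq2 hco u t (Y 0) b m hY hm
        have hdvd2 : q ∣ p * Y 0 + w 0 := ⟨Y 1, hstep0.2⟩
        have hle := Nat.le_of_dvd (by omega) (Nat.dvd_sub hdvd2 hdvd1)
        omega
      | cons htail =>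
        have hq0 : (q:ℚ) ≠ 0 := Nat.cast_ne_zero.2 (by omega)
        have hY1 : ratVal p q (u ++ [w 0]) = ((Y 1 : ℕ) : ℚ) := by
          have hc : ((p:ℚ) * (Y 0) + (w 0 : ℕ)) = (q:ℚ) * (Y 1) := by
            exact_mod_cast hstep0.2
          rw [ratVal_snoc, hY]
          field_simp
          linear_combination hc
        exact wmin_min p q hq2 hco l (u ++ [w 0]) (fun j => Y (j+1)) (fun j => w (j+1))
          hY1 (fun j => hstep (j+1)) t (by simpa using hlen)
          (by rwa [List.append_cons] at hin) htail

private lemma isWminInf_of (p q : ℕ) (hq2 : 2 ≤ q) (hqp : q < p) (hco : Nat.Coprime p q)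
    (u : List ℕ) (Y w : ℕ → ℕ) (hu : InLang p q u) (hne : u ≠ [])
    (hY : ratVal p q u = (Y 0 : ℚ))
    (hstep : ∀ j, w j < q ∧ p * Y j + w j = q * Y (j+1)) :
    IsWminInf p q u w := by
  have hq0 : (q:ℚ) ≠ 0 := Nat.cast_ne_zero.2 (by omega)
  have hval : ∀ l, ratVal p q (u ++ (List.range l).map w) = ((Y l : ℕ) : ℚ) := by
    intro l
    induction l with
    | zero => simpa using hY
    | succ l ih =>
      have hc : ((p:ℚ) * (Y l) + (w l : ℕ)) = (q:ℚ) * (Y (l+1)) := by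
        exact_mod_cast (hstep l).2
      rw [List.range_succ, List.map_append, List.map_cons, List.map_nil,
        ← List.append_assoc, ratVal_snoc, ih]
      field_simp
      linear_combination hc
  intro l
  refine ⟨by simp, ⟨?_, ⟨Y l, hval l⟩, ?_⟩, ?_⟩
  · intro a ha
    rcases List.mem_append.1 ha with h | h
    · exact hu.1 a h
    · obtain ⟨i, _, rfl⟩ := List.mem_map.1 h
      exact lt_trans (hstep i).1 hqp
  · rw [head?_append_left _ hne]
    exact hu.2.2
  · exact wmin_min p q hq2 hco l u Y w hY hstep

private lemma exists_rep (p q : ℕ) (hq2 : 2 ≤ q) (hqp : q < p) :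
    ∀ N : ℕ, 1 ≤ N → ∃ u : List ℕ, InLang p q u ∧ u ≠ [] ∧ ratVal p q u = (N : ℚ) := by
  intro N
  induction N using Nat.strong_induction_on with
  | _ N ih =>
    intro hN
    have hq0 : (q:ℚ) ≠ 0 := Nat.cast_ne_zero.2 (by omega)
    have hp0 : 0 < p := by omega
    have hqN : 1 ≤ q * N := Nat.mul_pos (by omega) (by omega)
    have hdM : p * (q * N / p) + (q * N) % p = q * N := Nat.div_add_mod _ _
    have hdp : (q * N) % p < p := Nat.mod_lt _ hp0
    by_cases hM0 : q * N / p = 0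
    · have hmodeq : (q*N) % p = q * N := by
        rw [hM0, mul_zero, zero_add] at hdM
        exact hdM
      have hval : ratVal p q [(q*N) % p] = (N:ℚ) := by
        rw [ratVal_singleton, hmodeq]
        push_cast
        field_simp
      refine ⟨[(q*N) % p], ⟨?_, ⟨N, hval⟩, ?_⟩, by simp, hval⟩
      · intro a ha
        simp only [List.mem_singleton] at ha
        omega
      · simp only [List.head?_cons, ne_eq, Option.some.injEq]
        omega
    · have hMN : q * N / p < N := by
        rw [Nat.div_lt_iff_lt_mul hp0]
        calc q * N < p * N := by
              exact Nat.mul_lt_mul_of_lt_of_le hqp (le_refl N) (by omega)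
          _ = N * p := by ring
      obtain ⟨u', hu', hne', hval'⟩ := ih _ hMN (Nat.pos_of_ne_zero hM0)
      have hval : ratVal p q (u' ++ [(q*N) % p]) = (N:ℚ) := by
        rw [ratVal_snoc, hval']
        have hc : ((p:ℚ) * (q * N / p : ℕ) + ((q*N) % p : ℕ)) = (q:ℚ) * N := by
          exact_mod_cast hdM
        field_simp
        linear_combination hc
      refine ⟨u' ++ [(q*N) % p], ⟨?_, ⟨N, hval⟩, ?_⟩, by simp, hval⟩
      · intro a ha
        rcases List.mem_append.1 ha with h | h
        · exact hu'.1 a h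
        · simp at h; omega
      · rw [head?_append_left _ hne']
        exact hu'.2.2

set_option maxHeartbeats 1000000 in
/-- For coprime `p > q ≥ 2` with `p < q²`: if every infinite minimal word `wmin_{p/q}(u)`
(`u ∈ L_{p/q}` nonempty) is normal over `{0,…,q-1}`, then there is no `Z_{p/q}`-number,
i.e. no real `x > 0` with `{x (p/q)^n} ∈ [0, 1/q)` for all `n ∈ ℕ`. -/
theorem stmt14 (p q : ℕ) (hq : 2 ≤ q) (hpq : q < p) (hco : Nat.Coprime p q)
    (hpq2 : p < q ^ 2)
    (hnormal : ∀ (u : List ℕ) (w : ℕ → ℕ), InLang p q u → u ≠ [] → IsWminInf p q u w →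
      NormalOver w (Finset.range q)) :
    ¬ ∃ x : ℝ, 0 < x ∧ ∀ n : ℕ, Int.fract (x * ((p : ℝ) / q) ^ n) < 1 / q := by
  rintro ⟨x, hx, hfr⟩
  have hq0R : (0:ℝ) < q := by exact_mod_cast (by omega : 0 < q)
  have hp0R : (0:ℝ) < p := by exact_mod_cast (by omega : 0 < p)
  have hqpR : (q:ℝ) < p := by exact_mod_cast hpq
  have hpq2R : (p:ℝ) < q * q := by
    have : (p:ℝ) < (q:ℝ)^2 := by exact_mod_cast hpq2
    nlinarith [this]
  set r : ℝ := (p:ℝ)/(q:ℝ) with hrdef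
  have hr1 : 1 < r := (one_lt_div hq0R).2 hqpR
  obtain ⟨n₀, hn₀⟩ := pow_unbounded_of_one_lt (x⁻¹) hr1
  set x' : ℝ := x * r ^ n₀ with hx'def
  have hx'1 : 1 ≤ x' := by
    have h1 : x * x⁻¹ < x * r ^ n₀ := mul_lt_mul_of_pos_left hn₀ hx
    rw [mul_inv_cancel₀ (ne_of_gt hx)] at h1
    linarith
  -- fractional parts
  have hfq : ∀ n : ℕ, Int.fract (x' * r ^ n) < 1 / q := by
    intro n
    have he : x * r ^ (n₀ + n) = x' * r ^ n := by rw [pow_add, hx'def]; ring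
    have := hfr (n₀ + n)
    rwa [he] at this
  set y : ℕ → ℤ := fun n => ⌊x' * r ^ n⌋ with hydef
  have hsplit : ∀ n : ℕ, x' * r ^ n = (y n : ℝ) + Int.fract (x' * r ^ n) := by
    intro n; rw [hydef]; exact (Int.floor_add_fract _).symm
  have hkey : ∀ n : ℕ, (q:ℝ) * (y (n+1) : ℝ) + q * Int.fract (x' * r ^ (n+1))
      = p * (y n : ℝ) + p * Int.fract (x' * r ^ n) := by
    intro n
    have he : (q:ℝ) * (x' * r ^ (n+1)) = p * (x' * r ^ n) := by
      rw [pow_succ, hrdef]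
      field_simp
    rw [hsplit n, hsplit (n+1)] at he
    linarith
  set W : ℕ → ℤ := fun n => q * y (n+1) - p * y n with hWdef
  have hWreal : ∀ n : ℕ, (W n : ℝ)
      = p * Int.fract (x' * r ^ n) - q * Int.fract (x' * r ^ (n+1)) := by
    intro n
    have := hkey n
    rw [hWdef]
    push_cast
    linarith
  have hfrac1 : ∀ n : ℕ, (q:ℝ) * Int.fract (x' * r ^ n) < 1 := by
    intro n
    have h1 := mul_lt_mul_of_pos_left (hfq n) hq0R
    rwa [mul_one_div, div_self (ne_of_gt hq0R)] at h1
  have hW0 : ∀ n : ℕ, 0 ≤ W n := by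
    intro n
    have h1 : (-1:ℝ) < (W n : ℝ) := by
      rw [hWreal n]
      have h2 := hfrac1 (n+1)
      have h3 : 0 ≤ (p:ℝ) * Int.fract (x' * r ^ n) :=
        mul_nonneg (le_of_lt hp0R) (Int.fract_nonneg _)
      linarith
    have h4 : (-1:ℤ) < W n := by exact_mod_cast h1
    omega
  have hWq : ∀ n : ℕ, W n < q := by
    intro n
    have h1 : (W n : ℝ) < q := by
      rw [hWreal n]
      have h2 : (p:ℝ) * Int.fract (x' * r ^ n) < p * (1/q) :=
        mul_lt_mul_of_pos_left (hfq n) hp0R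
      have h3 : (p:ℝ) * (1/q) < q := by
        rw [mul_one_div, div_lt_iff₀ hq0R]
        nlinarith
      have h4 : 0 ≤ (q:ℝ) * Int.fract (x' * r ^ (n+1)) :=
        mul_nonneg (le_of_lt hq0R) (Int.fract_nonneg _)
      linarith
    exact_mod_cast h1
  have hy0 : 1 ≤ y 0 := by
    rw [hydef]
    apply Int.le_floor.2
    simpa using hx'1
  have hyW : ∀ n : ℕ, (q:ℤ) * y (n+1) = p * y n + W n := by
    intro n; rw [hWdef]; ring
  have hyn : ∀ n : ℕ, 0 ≤ y n := by
    intro n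
    induction n with
    | zero => omega
    | succ n ih =>
      have h1 : 0 ≤ (q:ℤ) * y (n+1) := by
        rw [hyW n]
        have := hW0 n
        have h2 : 0 ≤ (p:ℤ) * y n := mul_nonneg (by exact_mod_cast (by omega : 0 ≤ p)) ih
        omega
      have hq' : (0:ℤ) < q := by exact_mod_cast (by omega : 0 < q)
      nlinarith
  set Y : ℕ → ℕ := fun n => (y n).toNat with hYdef
  set w : ℕ → ℕ := fun n => (W n).toNat with hwdef
  have hstepN : ∀ j : ℕ, w j < q ∧ p * Y j + w j = q * Y (j+1) := by
    intro j
    have h1 := hyW j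
    have h2 := hW0 j
    have h3 := hWq j
    have h4 := hyn j
    have h5 := hyn (j+1)
    have hwj : ((w j : ℕ) : ℤ) = W j := by
      have he : w j = (W j).toNat := rfl
      rw [he]; exact Int.toNat_of_nonneg h2
    have hYj : ((Y j : ℕ) : ℤ) = y j := by
      have he : Y j = (y j).toNat := rfl
      rw [he]; exact Int.toNat_of_nonneg h4
    have hYj1 : ((Y (j+1) : ℕ) : ℤ) = y (j+1) := by
      have he : Y (j+1) = (y (j+1)).toNat := rfl
      rw [he]; exact Int.toNat_of_nonneg h5
    constructor
    · have he : w j = (W j).toNat := rfl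
      omega
    · have : ((p * Y j + w j : ℕ) : ℤ) = ((q * Y (j+1) : ℕ) : ℤ) := by
        push_cast
        rw [hwj, hYj, hYj1]
        linarith
      exact_mod_cast this
  have hY01 : 1 ≤ Y 0 := by
    have he : Y 0 = (y 0).toNat := rfl
    omega
  obtain ⟨u, huL, hune, huval⟩ := exists_rep p q hq hpq (Y 0) hY01
  have hwinf : IsWminInf p q u w := isWminInf_of p q hq hpq hco u Y w huL hune huval hstepN
  have hnorm := hnormal u w huL hune hwinf
  -- apply normality to the forbidden pattern
  set L : ℕ := q * q with hLdef
  have hL1 : 1 ≤ L := by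
    rw [hLdef]; exact Nat.mul_pos (by omega) (by omega)
  have hfreq := hnorm.2 L hL1 (List.replicate L (q-1)) (List.length_replicate)
    (by
      intro a ha
      rw [List.eq_of_mem_replicate ha]
      exact Finset.mem_range.2 (by omega))
  -- the pattern never occurs
  have hzero : ∀ m : ℕ, ¬ ((List.range L).map (fun i => w (m + i)) = List.replicate L (q-1)) := by
    intro m hm
    have hall : ∀ i, i < L → w (m + i) = q - 1 := by
      intro i hi
      have hmem : w (m + i) ∈ List.replicate L (q-1) := by
        rw [← hm]
        exact List.mem_map.2 ⟨i, List.mem_range.2 hi, rfl⟩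
      exact List.eq_of_mem_replicate hmem
    -- each step with digit q-1 decreases q*q*fract by at least q*q - p
    have hstepf : ∀ n : ℕ, w n = q - 1 →
        (q:ℝ) * q * Int.fract (x' * r ^ (n+1)) + ((q:ℝ) * q - p)
          ≤ (q:ℝ) * q * Int.fract (x' * r ^ n) := by
      intro n hwn
      have hWn : W n = (q:ℤ) - 1 := by
        have h0 := hW0 n
        have he : (W n).toNat = q - 1 := hwn
        omega
      have heW : (p:ℝ) * Int.fract (x' * r ^ n) - q * Int.fract (x' * r ^ (n+1))
          = (q:ℝ) - 1 := by
        rw [← hWreal n, hWn]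
        push_cast
        ring
      have hkey2 := hfrac1 n
      nlinarith [hqpR, hq0R]
    have hacc : ∀ i : ℕ, i ≤ L →
        (q:ℝ) * q * Int.fract (x' * r ^ (m+i)) + i * ((q:ℝ) * q - p)
          ≤ (q:ℝ) * q * Int.fract (x' * r ^ m) := by
      intro i
      induction i with
      | zero => intro _; simp
      | succ i ih =>
        intro hi
        have h1 := ih (by omega)
        have h2 := hstepf (m+i) (hall i (by omega))
        have h3 : m + i + 1 = m + (i+1) := by omega
        rw [h3] at h2
        push_cast
        push_cast at h1
        nlinarith [h2]
    have hfinal := hacc L (le_refl L)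
    have hLcast : ((L:ℕ):ℝ) = (q:ℝ) * q := by rw [hLdef]; push_cast; ring
    rw [hLcast] at hfinal
    have h5 : (1:ℝ) ≤ (q:ℝ)*q - p := by
      have : ((p:ℕ):ℝ) + 1 ≤ ((q*q : ℕ):ℝ) := by
        exact_mod_cast (by nlinarith [hpq2] : p + 1 ≤ q * q)
      push_cast at this
      linarith
    have h6 : 0 ≤ Int.fract (x' * r ^ (m + L)) := Int.fract_nonneg _
    have h7 := hfrac1 m
    have hq2R : (2:ℝ) ≤ q := by exact_mod_cast hq
    have hA : (q:ℝ)*q*((q:ℝ)*q - p) ≤ (q:ℝ)*q * Int.fract (x' * r ^ m) := by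
      have hnn : (0:ℝ) ≤ (q:ℝ)*q * Int.fract (x' * r ^ (m+L)) := by positivity
      linarith
    have hB : (q:ℝ)*q ≤ (q:ℝ)*q*((q:ℝ)*q - p) := by nlinarith
    have hC : (q:ℝ)*q * Int.fract (x' * r ^ m) < q := by
      have := mul_lt_mul_of_pos_left h7 hq0R
      rw [mul_one] at this
      linarith [this]
    nlinarith
  have hfilter : ∀ N : ℕ, (Finset.range N).filter
      (fun m => (List.range L).map (fun i => w (m + i)) = List.replicate L (q-1)) = ∅ := by
    intro N
    apply Finset.filter_false_of_mem
    intro m _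
    exact hzero m
  have h0 : Filter.Tendsto
      (fun N => (((Finset.range N).filter
          (fun m => (List.range L).map (fun i => w (m + i)) = List.replicate L (q-1))).card : ℝ) / N)
      Filter.atTop (nhds 0) := by
    have : (fun N => (((Finset.range N).filter
          (fun m => (List.range L).map (fun i => w (m + i)) = List.replicate L (q-1))).card : ℝ) / N)
        = fun N => (0:ℝ) := by
      funext N
      rw [hfilter N]
      simp
    rw [this]
    exact tendsto_const_nhds
  have huniq := tendsto_nhds_unique hfreq h0
  rw [Finset.card_range] at huniq
  have hpos : (0:ℝ) < 1 / (q:ℝ) ^ L := by positivity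
  rw [huniq] at hpos
  exact lt_irrefl _ hpos
end

section
/- Let p > q ≥ 2 be coprime integers with p < q², and let x > 0 be a real number such that the fractional part of x·(p/q)^n lies in [0, 1/q) for every natural number n. Then for every n ∈ ℕ, ⌊x·(p/q)^{n+1}⌋ = ⌈(p/q)·⌊x·(p/q)^n⌋⌉; in particular ⌊x·(p/q)^n⌋ = T_{p/q}^n(⌊x⌋) for all n, where T_{p/q}(y) = ⌈py/q⌉. -/
lemma keylem (p q : ℕ) (hq : 2 ≤ q) (hpq2 : p < q ^ 2) (y : ℝ)
    (hy : Int.fract y < 1 / q) (h1 : Int.fract (y * ((p:ℝ)/q)) < 1 / q) :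
    ⌊y * ((p:ℝ)/q)⌋ = ⌈((p : ℚ) / q) * (⌊y⌋ : ℚ)⌉ := by
  have hq0 : (0:ℤ) < (q:ℤ) := by exact_mod_cast (by omega : 0 < q)
  have hqR : (0:ℝ) < (q:ℝ) := by exact_mod_cast (by omega : 0 < q)
  have hqQ : (0:ℚ) < (q:ℚ) := by exact_mod_cast (by omega : 0 < q)
  set m : ℤ := ⌊y⌋ with hm
  set s : ℤ := (p:ℤ) * m with hsdef
  set d : ℤ := s / q with hd
  set r : ℤ := s % q with hr
  have hs : (q:ℤ) * d + r = s := Int.mul_ediv_add_emod s q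
  have hr0 : 0 ≤ r := Int.emod_nonneg s (by omega)
  have hrq : r < q := Int.emod_lt_of_pos s hq0
  set f : ℝ := Int.fract y with hf
  have hf0 : 0 ≤ f := Int.fract_nonneg y
  have hyv : (m:ℝ) + f = y := Int.floor_add_fract y
  have hpq2R : (p:ℝ) < (q:ℝ)^2 := by exact_mod_cast hpq2
  have hp0R : (0:ℝ) ≤ (p:ℝ) := by positivity
  have hv : y * ((p:ℝ)/q) = (d:ℝ) + ((r:ℝ) + f * p)/q := by
    have hsR : (q:ℝ) * d + r = (p:ℝ) * m := by exact_mod_cast hs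
    field_simp
    nlinarith [hsR]
  have hceil : ⌈((p : ℚ) / q) * (m : ℚ)⌉ = if r = 0 then d else d + 1 := by
    have hsQ : (q:ℚ) * d + r = (p:ℚ) * m := by exact_mod_cast hs
    have harg : ((p : ℚ) / q) * (m : ℚ) = (d:ℚ) + (r:ℚ)/q := by
      field_simp; linarith [hsQ]
    by_cases h : r = 0
    · simp [h, harg]
    · have hr1 : 1 ≤ r := by omega
      simp only [h, if_false]
      rw [harg, Int.ceil_eq_iff]
      constructor
      · push_cast
        have : (0:ℚ) < (r:ℚ)/q := by positivity
        linarith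
      · push_cast
        have : (r:ℚ)/q ≤ 1 := by
          rw [div_le_one hqQ]; exact_mod_cast hrq.le
        linarith
  rw [hceil]
  have hfpq : f * p < q := by
    have hfq : f * q < 1 := (lt_div_iff₀ hqR).mp hy
    nlinarith [mul_le_mul_of_nonneg_left hpq2R.le hf0]
  have hrR : (0:ℝ) ≤ (r:ℝ) := by exact_mod_cast hr0
  have hrqR : (r:ℝ) < (q:ℝ) := by exact_mod_cast hrq
  have hfp0 : 0 ≤ f * (p:ℝ) := mul_nonneg hf0 hp0R
  have hnum0 : (0:ℝ) ≤ ((r:ℝ) + f * p)/q := by positivity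
  by_cases h : r = 0
  · have hR0 : (r:ℝ) = 0 := by exact_mod_cast congrArg (Int.cast : ℤ → ℝ) h
    simp only [h, if_pos]
    rw [Int.floor_eq_iff, hv]
    have hlt1 : ((r:ℝ) + f * p)/q < 1 := by
      rw [div_lt_one hqR]; linarith
    push_cast
    constructor <;> linarith
  · have hr1 : (1:ℝ) ≤ (r:ℝ) := by exact_mod_cast (by omega : (1:ℤ) ≤ r)
    simp only [h, if_neg]
    have hlt2 : ((r:ℝ) + f * p)/q < 2 := by
      rw [div_lt_iff₀ hqR]; linarith
    have hlow : (1:ℝ) ≤ ((r:ℝ) + f * p)/q := by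
      by_contra hc
      push_neg at hc
      have hfl : ⌊y * ((p:ℝ)/q)⌋ = d := by
        rw [Int.floor_eq_iff, hv]
        push_cast
        constructor <;> linarith
      have hfr : Int.fract (y * ((p:ℝ)/q)) = ((r:ℝ) + f * p)/q := by
        rw [Int.fract, hfl, hv]; ring
      rw [hfr] at h1
      have h1q : (1:ℝ)/q ≤ ((r:ℝ) + f * p)/q := by
        gcongr
        linarith
      linarith
    rw [Int.floor_eq_iff, hv]
    push_cast
    constructor <;> linarith

/-- For coprime `p > q ≥ 2` with `p < q²` and a real `x > 0` whose fractional parts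
`{x (p/q)^n}` all lie in `[0, 1/q)`: for every `n`,
`⌊x (p/q)^{n+1}⌋ = ⌈(p/q)·⌊x (p/q)^n⌋⌉`; in particular `⌊x (p/q)^n⌋ = T_{p/q}^n(⌊x⌋)`. -/
theorem stmt15 (p q : ℕ) (hq : 2 ≤ q) (hpq : q < p) (hco : Nat.Coprime p q)
    (hpq2 : p < q ^ 2)
    (x : ℝ) (hx : 0 < x)
    (hfrac : ∀ n : ℕ, Int.fract (x * ((p : ℝ) / q) ^ n) < 1 / q) :
    (∀ n : ℕ, ⌊x * ((p : ℝ) / q) ^ (n + 1)⌋ =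
        ⌈((p : ℚ) / q) * (⌊x * ((p : ℝ) / q) ^ n⌋ : ℚ)⌉) ∧
    (∀ n : ℕ, ⌊x * ((p : ℝ) / q) ^ n⌋ = (Tmap p q)^[n] ⌊x⌋) := by
  have key : ∀ n : ℕ, ⌊x * ((p : ℝ) / q) ^ (n + 1)⌋ =
      ⌈((p : ℚ) / q) * (⌊x * ((p : ℝ) / q) ^ n⌋ : ℚ)⌉ := by
    intro n
    have heq : x * ((p : ℝ) / q) ^ (n + 1) = (x * ((p : ℝ) / q) ^ n) * ((p:ℝ)/q) := by
      ring
    rw [heq]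
    exact keylem p q hq hpq2 _ (hfrac n) (heq ▸ hfrac (n+1))
  refine ⟨key, ?_⟩
  intro n
  induction n with
  | zero => simp
  | succ n ih =>
    rw [key n, ih, Function.iterate_succ_apply', Tmap]
    congr 1
    ring
end

section
/- Let p > q ≥ 1 be coprime integers with p > 2q − 1. Then there exist no nonempty u ∈ L_{p/q} and u′ ∈ L_{p/q} with wmin_{p/q}(u) = wmax_{p/q}(u′); that is, no infinite word is simultaneously a minimal word (with nonempty seed) and a maximal word. -/
lemma dvd_helper (q n : ℕ) (hq : 1 ≤ q) : q ∣ n + (q - n % q) % q := by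
  have hm : n % q < q := Nat.mod_lt _ (by omega)
  rcases Nat.eq_zero_or_pos (n % q) with h0 | h0
  · simp only [h0, Nat.sub_zero, Nat.mod_self, Nat.add_zero]
    exact Nat.dvd_of_mod_eq_zero h0
  · have hr : (q - n % q) % q = q - n % q := Nat.mod_eq_of_lt (by omega)
    rw [hr]
    have heq : n + (q - n % q) = q * (n / q) + q := by
      have := Nat.div_add_mod n q; omega
    rw [heq]
    exact ⟨n / q + 1, by ring⟩

lemma ratVal_append_singleton (p q : ℕ) (u : List ℕ) (d : ℕ) :
    ratVal p q (u ++ [d]) = (p : ℚ) / q * ratVal p q u + (d : ℚ) / q := by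
  simp [ratVal, List.foldl_append]

lemma inLang_append_digit (p q : ℕ) (hq : 1 ≤ q) (u : List ℕ) (N d : ℕ)
    (hu : ∀ a ∈ u, a < p) (hval : ratVal p q u = N) (hd : d < p)
    (hdvd : q ∣ p * N + d) (hhead : (u ++ [d]).head? ≠ some 0) :
    InLang p q (u ++ [d]) := by
  refine ⟨?_, ⟨(p * N + d) / q, ?_⟩, hhead⟩
  · intro a ha
    rcases List.mem_append.mp ha with h | h
    · exact hu a h
    · simp at h; omega
  · have hq0 : (q : ℚ) ≠ 0 := by positivity
    rw [ratVal_append_singleton, hval, Nat.cast_div hdvd hq0]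
    push_cast
    ring

/-- For coprime `p > q ≥ 1` with `p > 2q - 1`: no infinite word is simultaneously a minimal
word (with nonempty seed) and a maximal word in rational base `p/q`. -/
theorem stmt18 (p q : ℕ) (hq : 1 ≤ q) (hpq : q < p) (hco : Nat.Coprime p q)
    (h2q : 2 * q - 1 < p) :
    ¬ ∃ (u u' : List ℕ) (w : ℕ → ℕ), InLang p q u ∧ u ≠ [] ∧ InLang p q u' ∧
      IsWminInf p q u w ∧ IsWmaxInf p q u' w := by
  rintro ⟨u, u', w, ⟨hud, ⟨N, hN⟩, huh⟩, hne, ⟨hu'd, ⟨M, hM⟩, hu'h⟩, hmin, hmax⟩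
  -- minimal candidate digit
  set r : ℕ := (q - (p * N) % q) % q with hrdef
  have hrq : r < q := Nat.mod_lt _ (by omega)
  have hrdvd : q ∣ p * N + r := dvd_helper q (p * N) hq
  -- maximal candidate digit
  set r' : ℕ := (q - (p * M) % q) % q with hr'def
  have hr'q : r' < q := Nat.mod_lt _ (by omega)
  have hr'dvd : q ∣ p * M + r' := dvd_helper q (p * M) hq
  set a : ℕ := r' + q with hadef
  have hap : a < p := by omega
  have hadvd : q ∣ p * M + a := by
    obtain ⟨c, hc⟩ := hr'dvd
    refine ⟨c + 1, ?_⟩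
    rw [Nat.mul_add, Nat.mul_one]; omega
  -- [r] is a valid extension of u
  have hr_in : InLang p q (u ++ [r]) := by
    refine inLang_append_digit p q hq u N r hud hN (by omega) hrdvd ?_
    cases u with
    | nil => exact absurd rfl hne
    | cons x t => simpa using huh
  -- [a] is a valid extension of u'
  have ha_in : InLang p q (u' ++ [a]) := by
    refine inLang_append_digit p q hq u' M a hu'd hM hap hadvd ?_
    cases u' with
    | nil => simp; omega
    | cons x t => simpa using hu'h
  -- use minimality at length 1
  have hmin1 := hmin 1
  have hmax1 := hmax 1
  have hr1 : List.range 1 = [0] := rfl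
  simp only [IsWmin, IsWmax, hr1, List.map_cons, List.map_nil] at hmin1 hmax1
  obtain ⟨-, -, hleast⟩ := hmin1
  obtain ⟨-, -, hgreat⟩ := hmax1
  have h1 : ¬ r < w 0 := fun h => hleast [r] (by simp) hr_in (List.Lex.rel h)
  have h2 : ¬ w 0 < a := fun h => hgreat [a] (by simp) ha_in (List.Lex.rel h)
  omega
end
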